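/- arXiv:1909.02750 — 7 statements merged into one kernel-verified Lean document; each statement's English description precedes it below -/
import Mathlib

section
/- Let Θ₁ and Θ₂ be real symmetric positive definite p×p matrices and let ζ > 0. Let a = max{φ_max(Θ₁), φ_max(Θ₂)} and b = min{φ_min(Θ₁), φ_min(Θ₂)}, where φ_max and φ_min denote the largest and smallest eigenvalue. Then ‖(Θ₁ + ζΘ₁⁻¹) − (Θ₂ + ζΘ₂⁻¹)‖_F ≤ max{|1 − ζ/a²|, |1 − ζ/b²|} · ‖Θ₁ − Θ₂‖_F. -/
open Matrix

lemma sumsq_eq_trace {p : ℕ} (M : Matrix (Fin p) (Fin p) ℝ) :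
    ∑ i, ∑ j, (M i j) ^ 2 = (star M * M).trace := by
  simp only [Matrix.trace, Matrix.diag, Matrix.mul_apply, Matrix.star_apply, star_trivial, sq,
    Matrix.conjTranspose_apply]
  rw [Finset.sum_comm]

lemma trace_conj {p : ℕ} (U V K : Matrix (Fin p) (Fin p) ℝ)
    (hU : star U * U = 1) (hV : star V * V = 1) :
    (star (U * K * star V) * (U * K * star V)).trace = (star K * K).trace := by
  have h : star (U * K * star V) * (U * K * star V) = V * (star K * K) * star V := by
    calc star (U * K * star V) * (U * K * star V)
        = V * (star K * ((star U * U) * (K * star V))) := by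
          simp only [StarMul.star_mul, star_star, Matrix.mul_assoc]
        _ = V * (star K * K) * star V := by
          rw [hU, Matrix.one_mul]; simp only [Matrix.mul_assoc]
  rw [h, Matrix.trace_mul_comm, ← Matrix.mul_assoc, ← Matrix.mul_assoc, hV, Matrix.one_mul]

lemma scalar_bound {ζ a b x y : ℝ} (hζ : 0 < ζ) (hb : 0 < b) (hx : b ≤ x) (hx' : x ≤ a)
    (hy : b ≤ y) (hy' : y ≤ a) :
    |1 - ζ * (x * y)⁻¹| ≤ max |1 - ζ / a ^ 2| |1 - ζ / b ^ 2| := by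
  have hx0 : 0 < x := hb.trans_le hx
  have hy0 : 0 < y := hb.trans_le hy
  have hb2 : b ^ 2 ≤ x * y := by nlinarith
  have ha2 : x * y ≤ a ^ 2 := by nlinarith
  have hb20 : (0:ℝ) < b ^ 2 := by positivity
  have hxy0 : (0:ℝ) < x * y := by positivity
  have h1 : 1 - ζ / b ^ 2 ≤ 1 - ζ * (x * y)⁻¹ := by
    rw [← div_eq_mul_inv]; gcongr
  have h2 : 1 - ζ * (x * y)⁻¹ ≤ 1 - ζ / a ^ 2 := by
    rw [← div_eq_mul_inv]
    gcongr
  rw [max_comm]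
  exact abs_le_max_abs_abs h1 h2




/-- The Frobenius norm of a real matrix: the square root of the sum of the
squares of the entries. -/
noncomputable def frobNorm {p q : ℕ} (A : Matrix (Fin p) (Fin q) ℝ) : ℝ :=
  Real.sqrt (∑ i, ∑ j, (A i j) ^ 2)

/-- For real symmetric positive definite `p × p` matrices `Θ₁, Θ₂`
and `ζ > 0`, with `a` the largest and `b` the smallest among all eigenvalues of
`Θ₁` and `Θ₂`, we have
`‖(Θ₁ + ζΘ₁⁻¹) − (Θ₂ + ζΘ₂⁻¹)‖_F ≤ max {|1 − ζ/a²|, |1 − ζ/b²|} ‖Θ₁ − Θ₂‖_F`. -/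
theorem stmt0 {p : ℕ} (Θ₁ Θ₂ : Matrix (Fin p) (Fin p) ℝ)
    (h1 : Θ₁.PosDef) (h2 : Θ₂.PosDef) (ζ : ℝ) (hζ : 0 < ζ) (a b : ℝ)
    (ha : IsGreatest (Set.range h1.1.eigenvalues ∪ Set.range h2.1.eigenvalues) a)
    (hb : IsLeast (Set.range h1.1.eigenvalues ∪ Set.range h2.1.eigenvalues) b) :
    frobNorm ((Θ₁ + ζ • Θ₁⁻¹) - (Θ₂ + ζ • Θ₂⁻¹)) ≤
      max |1 - ζ / a ^ 2| |1 - ζ / b ^ 2| * frobNorm (Θ₁ - Θ₂) := by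
  classical
  set U : Matrix (Fin p) (Fin p) ℝ := (h1.1.eigenvectorUnitary : Matrix (Fin p) (Fin p) ℝ) with hU_def
  set V : Matrix (Fin p) (Fin p) ℝ := (h2.1.eigenvectorUnitary : Matrix (Fin p) (Fin p) ℝ) with hV_def
  set d : Fin p → ℝ := h1.1.eigenvalues with hd_def
  set e : Fin p → ℝ := h2.1.eigenvalues with he_def
  have hd : ∀ i, 0 < d i := h1.eigenvalues_pos
  have he : ∀ i, 0 < e i := h2.eigenvalues_pos
  have hUu : star U * U = 1 := Matrix.mem_unitaryGroup_iff'.mp h1.1.eigenvectorUnitary.2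
  have hUu' : U * star U = 1 := Matrix.mem_unitaryGroup_iff.mp h1.1.eigenvectorUnitary.2
  have hVv : star V * V = 1 := Matrix.mem_unitaryGroup_iff'.mp h2.1.eigenvectorUnitary.2
  have hVv' : V * star V = 1 := Matrix.mem_unitaryGroup_iff.mp h2.1.eigenvectorUnitary.2
  have hco1 : (RCLike.ofReal ∘ d : Fin p → ℝ) = d := by ext i; simp
  have hco2 : (RCLike.ofReal ∘ e : Fin p → ℝ) = e := by ext i; simp
  have hΘ1 : Θ₁ = U * Matrix.diagonal d * star U := by
    have h := h1.1.spectral_theorem; rw [hco1] at h; exact h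
  have hΘ2 : Θ₂ = V * Matrix.diagonal e * star V := by
    have h := h2.1.spectral_theorem; rw [hco2] at h; exact h
  have hdet1 : IsUnit Θ₁.det := isUnit_iff_ne_zero.mpr h1.det_pos.ne'
  have hdet2 : IsUnit Θ₂.det := isUnit_iff_ne_zero.mpr h2.det_pos.ne'
  set D' : Matrix (Fin p) (Fin p) ℝ := Matrix.diagonal (fun i => (d i)⁻¹) with hDp
  set E' : Matrix (Fin p) (Fin p) ℝ := Matrix.diagonal (fun j => (e j)⁻¹) with hEp
  have hinv1 : Θ₁⁻¹ = U * D' * star U := by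
    apply Matrix.inv_eq_right_inv
    calc Θ₁ * (U * D' * star U)
        = U * (Matrix.diagonal d * ((star U * U) * (D' * star U))) := by
          rw [hΘ1]; simp only [Matrix.mul_assoc]
      _ = U * (Matrix.diagonal d * D') * star U := by
          rw [hUu, Matrix.one_mul]; simp only [Matrix.mul_assoc]
      _ = 1 := by
          rw [hDp, Matrix.diagonal_mul_diagonal]
          have hfun : (fun i => d i * (d i)⁻¹) = fun _ => (1:ℝ) := by
            funext i; exact mul_inv_cancel₀ (hd i).ne'
          rw [hfun, Matrix.diagonal_one, Matrix.mul_one, hUu']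
  have hinv2 : Θ₂⁻¹ = V * E' * star V := by
    apply Matrix.inv_eq_right_inv
    calc Θ₂ * (V * E' * star V)
        = V * (Matrix.diagonal e * ((star V * V) * (E' * star V))) := by
          rw [hΘ2]; simp only [Matrix.mul_assoc]
      _ = V * (Matrix.diagonal e * E') * star V := by
          rw [hVv, Matrix.one_mul]; simp only [Matrix.mul_assoc]
      _ = 1 := by
          rw [hEp, Matrix.diagonal_mul_diagonal]
          have hfun : (fun i => e i * (e i)⁻¹) = fun _ => (1:ℝ) := by
            funext i; exact mul_inv_cancel₀ (he i).ne'
          rw [hfun, Matrix.diagonal_one, Matrix.mul_one, hVv']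
  set Δ : Matrix (Fin p) (Fin p) ℝ := Θ₁ - Θ₂ with hΔ
  set N : Matrix (Fin p) (Fin p) ℝ := star U * Δ * V with hN
  set K : Matrix (Fin p) (Fin p) ℝ := N - ζ • (D' * N * E') with hK
  have h5 : Θ₁⁻¹ * Δ * Θ₂⁻¹ = Θ₂⁻¹ - Θ₁⁻¹ := by
    have i1 : Θ₁⁻¹ * Θ₁ = 1 := Matrix.nonsing_inv_mul _ hdet1
    have i2 : Θ₂ * Θ₂⁻¹ = 1 := Matrix.mul_nonsing_inv _ hdet2
    calc Θ₁⁻¹ * (Θ₁ - Θ₂) * Θ₂⁻¹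
        = (Θ₁⁻¹ * Θ₁) * Θ₂⁻¹ - Θ₁⁻¹ * (Θ₂ * Θ₂⁻¹) := by noncomm_ring
      _ = Θ₂⁻¹ - Θ₁⁻¹ := by rw [i1, i2, Matrix.one_mul, Matrix.mul_one]
  have e1 : U * (star U * Δ * V) * star V = Δ := by
    have h : U * (star U * Δ * V) * star V = (U * star U) * Δ * (V * star V) := by
      simp only [Matrix.mul_assoc]
    rw [h, hUu', hVv', Matrix.one_mul, Matrix.mul_one]
  have e2 : U * (D' * (star U * Δ * V) * E') * star V
      = (U * D' * star U) * Δ * (V * E' * star V) := by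
    simp only [Matrix.mul_assoc]
  have hmain : (Θ₁ + ζ • Θ₁⁻¹) - (Θ₂ + ζ • Θ₂⁻¹) = U * K * star V := by
    have h6 : U * K * star V = Δ - ζ • (Θ₁⁻¹ * Δ * Θ₂⁻¹) := by
      rw [hK, hN, Matrix.mul_sub, Matrix.sub_mul, Matrix.mul_smul, Matrix.smul_mul, e1, e2,
        ← hinv1, ← hinv2]
    rw [h6, h5, smul_sub, hΔ]
    abel
  have hKnorm : ∑ i, ∑ j, ((U * K * star V) i j) ^ 2 = ∑ i, ∑ j, (K i j) ^ 2 := by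
    rw [sumsq_eq_trace, sumsq_eq_trace, trace_conj U V K hUu hVv]
  have hNnorm : ∑ i, ∑ j, (N i j) ^ 2 = ∑ i, ∑ j, (Δ i j) ^ 2 := by
    have h : N = star U * Δ * star (star V) := by rw [star_star, hN]
    rw [h, sumsq_eq_trace, sumsq_eq_trace Δ,
      trace_conj (star U) (star V) Δ (by rwa [star_star]) (by rwa [star_star])]
  have hKij : ∀ i j, K i j = (1 - ζ * (d i * e j)⁻¹) * N i j := by
    intro i j
    simp only [hK, Matrix.sub_apply, Matrix.smul_apply, hDp, hEp, Matrix.mul_diagonal,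
      Matrix.diagonal_mul, smul_eq_mul, mul_inv]
    ring
  set c : ℝ := max |1 - ζ / a ^ 2| |1 - ζ / b ^ 2| with hc
  have hc0 : 0 ≤ c := le_max_iff.mpr (Or.inl (abs_nonneg _))
  have hda : ∀ i, d i ≤ a := fun i => ha.2 (Set.mem_union_left _ ⟨i, rfl⟩)
  have hea : ∀ i, e i ≤ a := fun i => ha.2 (Set.mem_union_right _ ⟨i, rfl⟩)
  have hdb : ∀ i, b ≤ d i := fun i => hb.2 (Set.mem_union_left _ ⟨i, rfl⟩)
  have heb : ∀ i, b ≤ e i := fun i => hb.2 (Set.mem_union_right _ ⟨i, rfl⟩)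
  have hbpos : 0 < b := by
    rcases hb.1 with h | h
    · obtain ⟨i, rfl⟩ := h; exact hd i
    · obtain ⟨i, rfl⟩ := h; exact he i
  have hsum : ∑ i, ∑ j, (K i j) ^ 2 ≤ c ^ 2 * ∑ i, ∑ j, (N i j) ^ 2 := by
    rw [Finset.mul_sum]
    refine Finset.sum_le_sum fun i _ => ?_
    rw [Finset.mul_sum]
    refine Finset.sum_le_sum fun j _ => ?_
    rw [hKij i j, mul_pow]
    refine mul_le_mul_of_nonneg_right ?_ (sq_nonneg _)
    calc (1 - ζ * (d i * e j)⁻¹) ^ 2 = |1 - ζ * (d i * e j)⁻¹| ^ 2 := (sq_abs _).symm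
      _ ≤ c ^ 2 := by
          refine pow_le_pow_left₀ (abs_nonneg _) ?_ 2
          exact scalar_bound hζ hbpos (hdb i) (hda i) (heb j) (hea j)
  have hNnn : 0 ≤ ∑ i, ∑ j, (N i j) ^ 2 :=
    Finset.sum_nonneg fun i _ => Finset.sum_nonneg fun j _ => sq_nonneg _
  unfold frobNorm
  rw [hmain]
  calc Real.sqrt (∑ i, ∑ j, ((U * K * star V) i j) ^ 2)
      = Real.sqrt (∑ i, ∑ j, (K i j) ^ 2) := by rw [hKnorm]
    _ ≤ Real.sqrt (c ^ 2 * ∑ i, ∑ j, (N i j) ^ 2) := Real.sqrt_le_sqrt hsum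
    _ = c * Real.sqrt (∑ i, ∑ j, (N i j) ^ 2) := by
        rw [Real.sqrt_mul (sq_nonneg c), Real.sqrt_sq hc0]
    _ = c * Real.sqrt (∑ i, ∑ j, (Δ i j) ^ 2) := by rw [hNnorm]
end

section
/- Let S be a real symmetric p×p matrix with orthogonal eigendecomposition S = M diag(φ₁, …, φ_p) Mᵀ, where M is an orthogonal matrix whose columns are eigenvectors of S and φ₁, …, φ_p are the corresponding eigenvalues. Let λ > 0 and define Θ̂ = M diag(φ̂₁, …, φ̂_p) Mᵀ with φ̂_i = 2/(φ_i + √(φ_i² + 8λ)). Then Θ̂ is symmetric positive definite, and for every symmetric positive definite p×p matrix Θ with Θ ≠ Θ̂ one has −log det Θ̂ + tr(S Θ̂) + λ‖Θ̂‖_F² < −log det Θ + tr(S Θ) + λ‖Θ‖_F²; i.e., Θ̂ is the unique minimizer of the ridge-penalized negative log-likelihood over positive definite matrices. -/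
/-!
Since `φ̂ᵢ` solves `2λt² + φᵢt − 1 = 0`, the matrix `Θ̂` satisfies the stationarity equation
`Θ̂⁻¹ = S + 2λΘ̂`. The function `−log det` lies above its tangent plane at `Θ̂` (apply
`log x ≤ x − 1` to the eigenvalues of the congruent matrix `Θ̂^{-1/2} Θ Θ̂^{-1/2}`), and
`λ‖·‖_F²` lies above its tangent plane by exactly `λ‖Θ − Θ̂‖_F²`. Adding the two, stationarity
cancels the linear terms, so the objective at `Θ` exceeds that at `Θ̂` by at least
`λ‖Θ − Θ̂‖_F² > 0`.
-/

open scoped Matrix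

namespace Matrix

variable {n : Type*} [Fintype n]

theorem sum_sq_sub_sum_sq_of_isSymm {A : Matrix n n ℝ} (hA : A.IsSymm) (B : Matrix n n ℝ) :
    ∑ i, ∑ j, B i j ^ 2 - ∑ i, ∑ j, A i j ^ 2
      = 2 * (A * (B - A)).trace + ∑ i, ∑ j, (B - A) i j ^ 2 := by
  have htr : (A * (B - A)).trace = ∑ i, ∑ j, ((B - A) ⊙ A) i j := by
    rw [sum_hadamard_eq, hA.eq, trace_mul_comm]
  simp only [htr, Finset.mul_sum, ← Finset.sum_sub_distrib, ← Finset.sum_add_distrib]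
  refine Finset.sum_congr rfl fun i _ => Finset.sum_congr rfl fun j _ => ?_
  simp only [hadamard_apply, sub_apply]
  ring

theorem sum_sq_pos_of_ne_zero {A : Matrix n n ℝ} (hA : A ≠ 0) : 0 < ∑ i, ∑ j, A i j ^ 2 := by
  obtain ⟨i, j, hij⟩ : ∃ i j, A i j ≠ 0 := by
    by_contra! h
    exact hA (ext h)
  refine Finset.sum_pos' (fun i _ => Finset.sum_nonneg fun j _ => sq_nonneg _)
    ⟨i, Finset.mem_univ i, ?_⟩
  exact Finset.sum_pos' (fun j _ => sq_nonneg _) ⟨j, Finset.mem_univ j, sq_pos_of_ne_zero hij⟩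

variable [DecidableEq n]

theorem PosDef.log_det_add_card_le_trace {A : Matrix n n ℝ} (hA : A.PosDef) :
    Real.log A.det + Fintype.card n ≤ A.trace := by
  have hpos := hA.eigenvalues_pos
  rw [hA.isHermitian.det_eq_prod_eigenvalues, hA.isHermitian.trace_eq_sum_eigenvalues]
  simp only [RCLike.ofReal_real_eq_id, id_eq]
  rw [Real.log_prod fun i _ => (hpos i).ne', Fintype.card_eq_sum_ones, Nat.cast_sum,
    Nat.cast_one, ← Finset.sum_add_distrib]
  exact Finset.sum_le_sum fun i _ => by linarith [Real.log_le_sub_one_of_pos (hpos i)]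

open scoped MatrixOrder in
theorem PosDef.log_det_le_log_det_add_trace {A B : Matrix n n ℝ} (hA : A.PosDef)
    (hB : B.PosDef) : Real.log B.det ≤ Real.log A.det + (A⁻¹ * (B - A)).trace := by
  obtain ⟨X, hX⟩ := CStarAlgebra.nonneg_iff_eq_star_mul_self.mp hA.inv.posSemidef.nonneg
  rw [star_eq_conjTranspose] at hX
  have hXunit : IsUnit X := by
    rw [isUnit_iff_isUnit_det]
    refine isUnit_of_mul_isUnit_right (x := Xᴴ.det) ?_
    rw [← det_mul, ← hX, ← isUnit_iff_isUnit_det]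
    exact hA.inv.isUnit
  -- Apply `log_det_add_card_le_trace` to the congruent matrix `X B Xᴴ`, where `Xᴴ X = A⁻¹`.
  have hC : (X * B * Xᴴ).PosDef :=
    hB.mul_mul_conjTranspose_same (vecMul_injective_iff_isUnit.mpr hXunit)
  have htr : (X * B * Xᴴ).trace = (A⁻¹ * B).trace := by
    rw [trace_mul_cycle, hX]
  have hdet : (X * B * Xᴴ).det = B.det * A⁻¹.det := by
    rw [hX, det_mul, det_mul, det_mul]
    ring
  have hcard : (A⁻¹ * A).trace = Fintype.card n := by
    rw [nonsing_inv_mul _ ((isUnit_iff_isUnit_det A).mp hA.isUnit), trace_one]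
  have hlog := hC.log_det_add_card_le_trace
  rw [htr, hdet, Real.log_mul hB.det_pos.ne' hA.inv.det_pos.ne', det_nonsing_inv,
    Ring.inverse_eq_inv', Real.log_inv] at hlog
  rw [Matrix.mul_sub, trace_sub, hcard]
  linarith

theorem posDef_mul_diagonal_mul_transpose {M : Matrix n n ℝ} (hM : M * Mᵀ = 1) {b : n → ℝ}
    (hb : ∀ i, 0 < b i) : (M * diagonal b * Mᵀ).PosDef :=
  (PosDef.diagonal hb).mul_mul_conjTranspose_same
    (vecMul_injective_iff_isUnit.mpr (IsUnit.of_mul_eq_one Mᵀ hM))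

theorem inv_mul_diagonal_mul_transpose {M : Matrix n n ℝ} (hM : M * Mᵀ = 1) {a b : n → ℝ}
    (hab : ∀ i, a i * b i = 1) : (M * diagonal b * Mᵀ)⁻¹ = M * diagonal a * Mᵀ := by
  refine inv_eq_left_inv ?_
  have hdiag : diagonal a * diagonal b = 1 := by
    rw [diagonal_mul_diagonal, ← diagonal_one]
    exact congrArg diagonal (funext hab)
  calc M * diagonal a * Mᵀ * (M * diagonal b * Mᵀ)
      = M * (diagonal a * (Mᵀ * M) * diagonal b) * Mᵀ := by simp only [Matrix.mul_assoc]
    _ = 1 := by rw [mul_eq_one_comm.mp hM, Matrix.mul_one, hdiag, Matrix.mul_one, hM]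

end Matrix

open Matrix

section Ridge

variable {n : Type*} [Fintype n] [DecidableEq n]

noncomputable def ridgeNLL (S : Matrix n n ℝ) (lam : ℝ) (Θ : Matrix n n ℝ) : ℝ :=
  -Real.log Θ.det + (S * Θ).trace + lam * ∑ i, ∑ j, Θ i j ^ 2

theorem ridgeNLL_add_le_of_inv_eq {S Θhat Θ : Matrix n n ℝ} {lam : ℝ} (hΘhat : Θhat.PosDef)
    (hinv : Θhat⁻¹ = S + (2 * lam) • Θhat) (hΘ : Θ.PosDef) :
    ridgeNLL S lam Θhat + lam * ∑ i, ∑ j, (Θ - Θhat) i j ^ 2 ≤ ridgeNLL S lam Θ := by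
  have hlog := hΘhat.log_det_le_log_det_add_trace hΘ
  have hsq := sum_sq_sub_sum_sq_of_isSymm (isHermitian_iff_isSymm.mp hΘhat.isHermitian) Θ
  rw [hinv, Matrix.add_mul, trace_add, smul_mul, trace_smul, Matrix.mul_sub, trace_sub,
    smul_eq_mul] at hlog
  unfold ridgeNLL
  linear_combination hlog - lam * hsq

theorem ridgeNLL_lt_of_inv_eq {S Θhat Θ : Matrix n n ℝ} {lam : ℝ} (hlam : 0 < lam)
    (hΘhat : Θhat.PosDef) (hinv : Θhat⁻¹ = S + (2 * lam) • Θhat) (hΘ : Θ.PosDef)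
    (hne : Θ ≠ Θhat) : ridgeNLL S lam Θhat < ridgeNLL S lam Θ :=
  (lt_add_of_pos_right _ (mul_pos hlam (sum_sq_pos_of_ne_zero (sub_ne_zero.mpr hne)))).trans_le
    (ridgeNLL_add_le_of_inv_eq hΘhat hinv hΘ)

end Ridge

theorem add_sqrt_sq_add_pos (a : ℝ) {c : ℝ} (hc : 0 < c) : 0 < a + Real.sqrt (a ^ 2 + c) := by
  have : |a| < Real.sqrt (a ^ 2 + c) := by
    rw [← Real.sqrt_sq_eq_abs]
    exact Real.sqrt_lt_sqrt (sq_nonneg _) (by linarith)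
  linarith [neg_abs_le a]

noncomputable def ridgeEigenvalue (lam a : ℝ) : ℝ :=
  2 / (a + Real.sqrt (a ^ 2 + 8 * lam))

theorem ridgeEigenvalue_pos {lam : ℝ} (hlam : 0 < lam) (a : ℝ) : 0 < ridgeEigenvalue lam a :=
  div_pos two_pos (add_sqrt_sq_add_pos a (by positivity))

theorem add_two_mul_ridgeEigenvalue_mul_ridgeEigenvalue {lam : ℝ} (hlam : 0 < lam) (a : ℝ) :
    (a + 2 * lam * ridgeEigenvalue lam a) * ridgeEigenvalue lam a = 1 := by
  have hne := (add_sqrt_sq_add_pos a (c := 8 * lam) (by positivity)).ne'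
  have hsq : Real.sqrt (a ^ 2 + 8 * lam) ^ 2 = a ^ 2 + 8 * lam := Real.sq_sqrt (by positivity)
  unfold ridgeEigenvalue
  generalize Real.sqrt (a ^ 2 + 8 * lam) = s at hne hsq ⊢
  field_simp
  linear_combination -hsq

/-- If `S = M diag(φ) Mᵀ` with `M` orthogonal, `λ > 0`, and
`Θ̂ = M diag(φ̂) Mᵀ` with `φ̂ᵢ = 2/(φᵢ + √(φᵢ² + 8λ))`, then `Θ̂` is symmetric
positive definite and is the unique minimizer of the ridge-penalized negative
log-likelihood `Θ ↦ −log det Θ + tr(SΘ) + λ‖Θ‖_F²` over symmetric positive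
definite matrices. -/
theorem stmt3 {p : ℕ} (S M : Matrix (Fin p) (Fin p) ℝ) (φ : Fin p → ℝ)
    (hM : M * Mᵀ = 1) (hS : S = M * Matrix.diagonal φ * Mᵀ)
    (lam : ℝ) (hlam : 0 < lam) (Θhat : Matrix (Fin p) (Fin p) ℝ)
    (hΘhat : Θhat =
      M * Matrix.diagonal (fun i => 2 / (φ i + Real.sqrt ((φ i) ^ 2 + 8 * lam))) * Mᵀ) :
    Θhat.PosDef ∧
      ∀ Θ : Matrix (Fin p) (Fin p) ℝ, Θ.PosDef → Θ ≠ Θhat →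
        -Real.log Θhat.det + (S * Θhat).trace + lam * ∑ i, ∑ j, (Θhat i j) ^ 2 <
          -Real.log Θ.det + (S * Θ).trace + lam * ∑ i, ∑ j, (Θ i j) ^ 2 := by
  replace hΘhat : Θhat = M * diagonal (ridgeEigenvalue lam <| φ ·) * Mᵀ := hΘhat
  have hΘhatPD : Θhat.PosDef :=
    hΘhat ▸ posDef_mul_diagonal_mul_transpose hM (ridgeEigenvalue_pos hlam <| φ ·)
  have hdiag : diagonal (fun i => φ i + 2 * lam * ridgeEigenvalue lam (φ i))
      = diagonal φ + (2 * lam) • diagonal (ridgeEigenvalue lam <| φ ·) := by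
    rw [← diagonal_smul, diagonal_add]
    rfl
  have hinv : Θhat⁻¹ = S + (2 * lam) • Θhat := by
    rw [hΘhat, inv_mul_diagonal_mul_transpose hM
      (add_two_mul_ridgeEigenvalue_mul_ridgeEigenvalue hlam <| φ ·), hdiag, hS,
      Matrix.mul_add, Matrix.add_mul, Matrix.mul_smul, Matrix.smul_mul]
  exact ⟨hΘhatPD, fun Θ hΘ hne => ridgeNLL_lt_of_inv_eq hlam hΘhatPD hinv hΘ hne⟩
end

section
/- Let S and S′ be real symmetric p×p matrices and λ > 0. Let Θ̂ be the minimizer of Θ ↦ −log det Θ + tr(SΘ) + λ‖Θ‖_F² over symmetric positive definite matrices, and let Θ̂′ be the minimizer of the same objective with S replaced by S′. Then ‖Θ̂′ − Θ̂‖_F ≤ max{‖Θ̂‖₂², ‖Θ̂′‖₂²} · ‖S′ − S‖_F, where ‖·‖₂ denotes the spectral norm (largest singular value). -/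
open scoped Matrix

/-- The spectral norm (largest singular value) of a real square matrix:
the supremum of `‖Av‖₂` over unit vectors `v`. -/
noncomputable def specNorm {p : ℕ} (A : Matrix (Fin p) (Fin p) ℝ) : ℝ :=
  sSup {r : ℝ | ∃ v : Fin p → ℝ, (∑ i, (v i) ^ 2) = 1 ∧
    r = Real.sqrt (∑ i, (A.mulVec v i) ^ 2)}

/-- The ridge-penalized negative log-likelihood with sample covariance `S` and
tuning parameter `lam`. -/
noncomputable def ridgeObj {p : ℕ} (S : Matrix (Fin p) (Fin p) ℝ) (lam : ℝ)
    (Θ : Matrix (Fin p) (Fin p) ℝ) : ℝ :=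
  -Real.log Θ.det + (S * Θ).trace + lam * ∑ i, ∑ j, (Θ i j) ^ 2

/-!
A minimizer `Θ` of the ridge objective over the open convex cone of positive definite matrices
satisfies the first-order condition `tr(Θ⁻¹ D) ≤ tr(S D) + 2λ tr(Θᵀ D)` in every direction
`D = Θ' - Θ` pointing into the cone. It comes from comparing the objective at `Θ` and at
`Z = Θ + t D`, bounding the log-determinant by its tangent, `log det Θ - log det Z ≤ tr(Z⁻¹ Θ) - p`,
and letting `t → 0⁺`.

Adding the conditions for `Θ̂` (direction `Δ = Θ̂' - Θ̂`) and `Θ̂'` (direction `-Δ`) and using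
`Θ̂⁻¹ - Θ̂'⁻¹ = Θ̂⁻¹ Δ Θ̂'⁻¹` gives
`tr(Θ̂⁻¹ Δ Θ̂'⁻¹ Δ) + 2λ ‖Δ‖_F² ≤ tr((S - S') Δ) ≤ ‖Δ‖_F ‖S' - S‖_F`.
Since `‖Θ‖₂ Θ⁻¹ ⪰ I` for positive definite `Θ`, the first trace is at least
`‖Δ‖_F² / (‖Θ̂‖₂ ‖Θ̂'‖₂)`, so `‖Δ‖_F ≤ ‖Θ̂‖₂ ‖Θ̂'‖₂ ‖S' - S‖_F`.
-/

open Matrix Filter Topology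

namespace Matrix

section Trace

variable {m n : Type*} [Fintype m] [Fintype n]

theorem trace_transpose_mul_eq_sum (A B : Matrix m n ℝ) :
    (Aᵀ * B).trace = ∑ i, ∑ j, A i j * B i j := by
  simp only [trace, diag, mul_apply, transpose_apply]
  exact Finset.sum_comm

theorem abs_trace_transpose_mul_le (A B : Matrix m n ℝ) :
    |(Aᵀ * B).trace| ≤ √(∑ i, ∑ j, A i j ^ 2) * √(∑ i, ∑ j, B i j ^ 2) := by
  simp only [trace_transpose_mul_eq_sum, ← Fintype.sum_prod_type']
  rw [← Real.sqrt_mul (by positivity)]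
  exact Real.abs_le_sqrt (Finset.sum_mul_sq_le_sq_mul_sq _ _ _)

end Trace

theorem PosDef.add_smul_sub {n : Type*} {A B : Matrix n n ℝ} (hA : A.PosDef) (hB : B.PosDef)
    {t : ℝ} (ht₀ : 0 < t) (ht₁ : t ≤ 1) : (A + t • (B - A)).PosDef := by
  rw [show A + t • (B - A) = t • B + (1 - t) • A by module]
  exact (hB.smul ht₀).add_posSemidef (hA.posSemidef.smul (by linarith))

variable {n : Type*} [Fintype n] [DecidableEq n]

open scoped MatrixOrder in
theorem PosSemidef.trace_mul_nonneg {X Y : Matrix n n ℝ} (hX : X.PosSemidef)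
    (hY : Y.PosSemidef) : 0 ≤ (X * Y).trace := by
  set R := CFC.sqrt Y
  have hR : R.PosSemidef := nonneg_iff_posSemidef.mp (CFC.sqrt_nonneg Y)
  have hRXR : (R * X * R).PosSemidef := by
    simpa only [hR.isHermitian.eq] using hX.mul_mul_conjTranspose_same R
  rw [← CFC.sqrt_mul_sqrt_self Y hY.nonneg, ← Matrix.mul_assoc, trace_mul_cycle]
  exact hRXR.trace_nonneg

theorem trace_le_mul_trace_mul_of_posSemidef {X Y : Matrix n n ℝ} {c : ℝ}
    (hX : (c • X - 1).PosSemidef) (hY : Y.PosSemidef) : Y.trace ≤ c * (X * Y).trace := by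
  have := hX.trace_mul_nonneg hY
  rwa [Matrix.sub_mul, smul_mul, Matrix.one_mul, trace_sub, trace_smul, smul_eq_mul,
    sub_nonneg] at this

theorem PosDef.log_det_le_trace_sub_card {C : Matrix n n ℝ} (hC : C.PosDef) :
    Real.log C.det ≤ C.trace - Fintype.card n := by
  have hev := hC.eigenvalues_pos
  rw [hC.isHermitian.det_eq_prod_eigenvalues, hC.isHermitian.trace_eq_sum_eigenvalues]
  simp only [RCLike.ofReal_real_eq_id, id]
  rw [Real.log_prod fun i _ => (hev i).ne']
  calc ∑ i, Real.log (hC.isHermitian.eigenvalues i)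
      ≤ ∑ i, (hC.isHermitian.eigenvalues i - 1) :=
        Finset.sum_le_sum fun i _ => Real.log_le_sub_one_of_pos (hev i)
    _ = _ := by simp [Finset.sum_sub_distrib]

open scoped MatrixOrder in
theorem PosDef.log_det_sub_log_det_le {A B : Matrix n n ℝ} (hA : A.PosDef) (hB : B.PosDef) :
    Real.log A.det - Real.log B.det ≤ (B⁻¹ * A).trace - Fintype.card n := by
  set R := CFC.sqrt B⁻¹
  have hR : R.PosSemidef := nonneg_iff_posSemidef.mp (CFC.sqrt_nonneg _)
  have hRR : R * R = B⁻¹ := CFC.sqrt_mul_sqrt_self _ hB.inv.posSemidef.nonneg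
  have hdet : (R * A * R).det = A.det * B.det⁻¹ := by
    have : R.det * R.det = B.det⁻¹ := by
      rw [← det_mul, hRR, det_nonsing_inv, Ring.inverse_eq_inv']
    rw [det_mul, det_mul, ← this]
    ring
  have hdet_pos : 0 < (R * A * R).det := hdet ▸ mul_pos hA.det_pos (inv_pos.mpr hB.det_pos)
  have hRAR : (R * A * R).PosDef := by
    have := hA.posSemidef.mul_mul_conjTranspose_same R
    rw [hR.isHermitian.eq] at this
    exact this.posDef_iff_det_ne_zero.mpr hdet_pos.ne'
  have := hRAR.log_det_le_trace_sub_card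
  rwa [hdet, Real.log_mul hA.det_pos.ne' (inv_pos.mpr hB.det_pos).ne', Real.log_inv,
    trace_mul_cycle, hRR, ← sub_eq_add_neg] at this

end Matrix

variable {p : ℕ}

theorem frobNorm_sq {q : ℕ} (A : Matrix (Fin p) (Fin q) ℝ) : frobNorm A ^ 2 = (Aᵀ * A).trace := by
  rw [frobNorm, Real.sq_sqrt (by positivity), trace_transpose_mul_eq_sum]
  simp only [sq]

theorem abs_trace_transpose_mul_le_frobNorm {q : ℕ} (A B : Matrix (Fin p) (Fin q) ℝ) :
    |(Aᵀ * B).trace| ≤ frobNorm A * frobNorm B :=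
  abs_trace_transpose_mul_le A B

theorem specNorm_nonneg (A : Matrix (Fin p) (Fin p) ℝ) : 0 ≤ specNorm A :=
  Real.sSup_nonneg fun _ ⟨_, _, hr⟩ => hr ▸ Real.sqrt_nonneg _

theorem bddAbove_specNorm_set (A : Matrix (Fin p) (Fin p) ℝ) :
    BddAbove {r : ℝ | ∃ v : Fin p → ℝ, (∑ i, (v i) ^ 2) = 1 ∧
      r = Real.sqrt (∑ i, (A.mulVec v i) ^ 2)} := by
  refine ⟨frobNorm A, ?_⟩
  rintro _ ⟨v, hv, rfl⟩
  refine Real.sqrt_le_sqrt (Finset.sum_le_sum fun i _ => ?_)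
  simpa only [mulVec, dotProduct, hv, mul_one] using
    Finset.sum_mul_sq_le_sq_mul_sq Finset.univ (A i) v

theorem Matrix.IsHermitian.eigenvalues_le_specNorm {A : Matrix (Fin p) (Fin p) ℝ}
    (hA : A.IsHermitian) (i : Fin p) : hA.eigenvalues i ≤ specNorm A := by
  set v : Fin p → ℝ := ⇑(hA.eigenvectorBasis i)
  have hv : ∑ j, v j ^ 2 = 1 := by
    have := EuclideanSpace.real_norm_sq_eq (hA.eigenvectorBasis i)
    rwa [hA.eigenvectorBasis.orthonormal.1 i, one_pow, eq_comm] at this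
  have hAv : √(∑ j, (A *ᵥ v) j ^ 2) = |hA.eigenvalues i| := by
    simp only [v, hA.mulVec_eigenvectorBasis i, Pi.smul_apply, smul_eq_mul, mul_pow,
      ← Finset.mul_sum]
    rw [hv, mul_one, Real.sqrt_sq_eq_abs]
  exact (le_abs_self _).trans (le_csSup (bddAbove_specNorm_set A) ⟨v, hv, hAv.symm⟩)

open scoped MatrixOrder in
theorem Matrix.PosDef.posSemidef_specNorm_smul_inv_sub_one {A : Matrix (Fin p) (Fin p) ℝ}
    (hA : A.PosDef) : (specNorm A • A⁻¹ - 1).PosSemidef := by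
  rw [← Matrix.le_iff]
  have hcont (f : ℝ → ℝ) : ContinuousOn f (spectrum ℝ A) :=
    A.finite_real_spectrum.continuousOn f
  have hinv : specNorm A • A⁻¹ = cfc (fun x => specNorm A * x⁻¹) A := by
    have := cfc_inv_id (R := ℝ) hA.isUnit.unit
    simp only [IsUnit.unit_spec, Matrix.coe_units_inv] at this
    rw [cfc_const_mul _ _ _ (hcont _), this]
  rw [hinv]
  refine one_le_cfc _ A ?_ (hcont _)
  rw [hA.isHermitian.spectrum_real_eq_range_eigenvalues]
  rintro _ ⟨i, rfl⟩
  rw [le_mul_inv_iff₀ (hA.eigenvalues_pos i), one_mul]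
  exact hA.isHermitian.eigenvalues_le_specNorm i

theorem trace_mul_self_le_specNorm_mul_specNorm_mul {A B Δ : Matrix (Fin p) (Fin p) ℝ}
    (hA : A.PosDef) (hB : B.PosDef) (hΔ : Δ.IsHermitian) :
    (Δ * Δ).trace ≤ specNorm A * specNorm B * (A⁻¹ * Δ * B⁻¹ * Δ).trace := by
  have hΔΔ : (Δ * Δ).PosSemidef := by
    simpa only [hΔ.eq] using posSemidef_self_mul_conjTranspose Δ
  have hΔBΔ : (Δ * B⁻¹ * Δ).PosSemidef := by
    simpa only [hΔ.eq] using hB.inv.posSemidef.mul_mul_conjTranspose_same Δ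
  calc (Δ * Δ).trace ≤ specNorm B * (B⁻¹ * (Δ * Δ)).trace :=
        trace_le_mul_trace_mul_of_posSemidef hB.posSemidef_specNorm_smul_inv_sub_one hΔΔ
    _ = specNorm B * (Δ * B⁻¹ * Δ).trace := by rw [← Matrix.mul_assoc, trace_mul_cycle]
    _ ≤ specNorm B * (specNorm A * (A⁻¹ * (Δ * B⁻¹ * Δ)).trace) :=
        mul_le_mul_of_nonneg_left
          (trace_le_mul_trace_mul_of_posSemidef hA.posSemidef_specNorm_smul_inv_sub_one hΔBΔ)
          (specNorm_nonneg B)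
    _ = _ := by simp only [Matrix.mul_assoc]; ring

theorem ridgeObj_eq_trace (S : Matrix (Fin p) (Fin p) ℝ) (lam : ℝ) (Θ : Matrix (Fin p) (Fin p) ℝ) :
    ridgeObj S lam Θ = -Real.log Θ.det + (S * Θ).trace + lam * (Θᵀ * Θ).trace := by
  simp only [ridgeObj, trace_transpose_mul_eq_sum, sq]

section FirstOrder

variable {S A B : Matrix (Fin p) (Fin p) ℝ} {lam : ℝ}

theorem trace_inv_add_smul_mul_le_of_isMinOn (hA : A.PosDef) (hB : B.PosDef)
    (hmin : IsMinOn (ridgeObj S lam) {Θ | Θ.PosDef} A) {t : ℝ} (ht₀ : 0 < t) (ht₁ : t ≤ 1) :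
    ((A + t • (B - A))⁻¹ * (B - A)).trace ≤ (S * (B - A)).trace
      + 2 * lam * (Aᵀ * (B - A)).trace + t * (lam * ((B - A)ᵀ * (B - A)).trace) := by
  set D := B - A
  set Z := A + t • D
  have hZ : Z.PosDef := hA.add_smul_sub hB ht₀ ht₁
  have hAZ : ridgeObj S lam A ≤ ridgeObj S lam Z := isMinOn_iff.mp hmin Z hZ
  have hlog : Real.log A.det - Real.log Z.det ≤ -(t * (Z⁻¹ * D).trace) := by
    have hZA : Z⁻¹ * A = 1 - t • (Z⁻¹ * D) := by
      rw [show A = Z - t • D by simp [Z], Matrix.mul_sub, nonsing_inv_mul _ hZ.det_pos.ne'.isUnit,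
        Matrix.mul_smul]
    have := hA.log_det_sub_log_det_le hZ
    rw [hZA, trace_sub, trace_one, trace_smul, smul_eq_mul] at this
    linarith
  have hDA : (Dᵀ * A).trace = (Aᵀ * D).trace := by
    rw [← trace_transpose, transpose_mul, transpose_transpose]
  have hpen : (Zᵀ * Z).trace
      = (Aᵀ * A).trace + 2 * t * (Aᵀ * D).trace + t ^ 2 * (Dᵀ * D).trace := by
    simp only [Z, transpose_add, transpose_smul, Matrix.add_mul, Matrix.mul_add, smul_mul,
      Matrix.mul_smul, trace_add, trace_smul, smul_eq_mul, hDA]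
    ring
  have hlin : (S * Z).trace = (S * A).trace + t * (S * D).trace := by
    simp only [Z, Matrix.mul_add, Matrix.mul_smul, trace_add, trace_smul, smul_eq_mul]
  rw [ridgeObj_eq_trace, ridgeObj_eq_trace, hpen, hlin] at hAZ
  refine le_of_mul_le_mul_left ?_ ht₀
  linarith

theorem trace_inv_mul_sub_le_of_isMinOn (hA : A.PosDef) (hB : B.PosDef)
    (hmin : IsMinOn (ridgeObj S lam) {Θ | Θ.PosDef} A) :
    (A⁻¹ * (B - A)).trace ≤ (S * (B - A)).trace + 2 * lam * (Aᵀ * (B - A)).trace := by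
  set D := B - A
  have hinv : ContinuousAt (fun t : ℝ => (A + t • D)⁻¹) 0 := by
    refine ContinuousAt.comp_of_eq (continuousAt_matrix_inv A ?_) (by fun_prop) (by simp)
    rw [Ring.inverse_eq_inv']
    exact continuousAt_inv₀ hA.det_pos.ne'
  have hlhs : Tendsto (fun t : ℝ => ((A + t • D)⁻¹ * D).trace) (𝓝[>] 0)
      (𝓝 (A⁻¹ * D).trace) := by
    have := ((by fun_prop : Continuous fun M : Matrix (Fin p) (Fin p) ℝ => (M * D).trace)
      |>.continuousAt.comp hinv).tendsto
    simpa only [Function.comp_def, zero_smul, add_zero] using this.mono_left nhdsWithin_le_nhds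
  have hrhs : Tendsto (fun t : ℝ => (S * D).trace + 2 * lam * (Aᵀ * D).trace
      + t * (lam * (Dᵀ * D).trace)) (𝓝[>] 0) (𝓝 ((S * D).trace + 2 * lam * (Aᵀ * D).trace)) := by
    have := ((by fun_prop : Continuous fun t : ℝ => (S * D).trace + 2 * lam * (Aᵀ * D).trace
      + t * (lam * (Dᵀ * D).trace)).tendsto 0)
    simpa using this.mono_left nhdsWithin_le_nhds
  refine le_of_tendsto_of_tendsto hlhs hrhs ?_
  filter_upwards [Ioc_mem_nhdsGT zero_lt_one] with t ⟨ht₀, ht₁⟩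
  exact trace_inv_add_smul_mul_le_of_isMinOn hA hB hmin ht₀ ht₁

theorem trace_inv_mul_inv_mul_add_le_of_isMinOn {S' : Matrix (Fin p) (Fin p) ℝ}
    (hA : A.PosDef) (hB : B.PosDef) (hAmin : IsMinOn (ridgeObj S lam) {Θ | Θ.PosDef} A)
    (hBmin : IsMinOn (ridgeObj S' lam) {Θ | Θ.PosDef} B) :
    (A⁻¹ * (B - A) * B⁻¹ * (B - A)).trace + 2 * lam * ((B - A) * (B - A)).trace
      ≤ ((S - S') * (B - A)).trace := by
  have hA_min := trace_inv_mul_sub_le_of_isMinOn hA hB hAmin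
  have hB_min := trace_inv_mul_sub_le_of_isMinOn hB hA hBmin
  have hAT : Aᵀ = A := by simpa using hA.isHermitian.eq
  have hBT : Bᵀ = B := by simpa using hB.isHermitian.eq
  have hres : A⁻¹ * (B - A) * B⁻¹ = A⁻¹ - B⁻¹ := by
    rw [Matrix.mul_sub, nonsing_inv_mul _ hA.det_pos.ne'.isUnit, Matrix.sub_mul, Matrix.one_mul,
      Matrix.mul_assoc, mul_nonsing_inv _ hB.det_pos.ne'.isUnit, Matrix.mul_one]
  rw [hAT] at hA_min
  rw [hBT, ← neg_sub B A] at hB_min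
  simp only [Matrix.mul_neg, trace_neg] at hB_min
  rw [hres]
  simp only [Matrix.sub_mul, trace_sub] at hA_min hB_min ⊢
  linarith

theorem frobNorm_sub_sq_le_of_isMinOn {S' : Matrix (Fin p) (Fin p) ℝ} (hlam : 0 ≤ lam)
    (hA : A.PosDef) (hB : B.PosDef) (hAmin : IsMinOn (ridgeObj S lam) {Θ | Θ.PosDef} A)
    (hBmin : IsMinOn (ridgeObj S' lam) {Θ | Θ.PosDef} B) :
    frobNorm (B - A) ^ 2 ≤ specNorm A * specNorm B * frobNorm (S' - S) * frobNorm (B - A) := by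
  have hkey := trace_inv_mul_inv_mul_add_le_of_isMinOn hA hB hAmin hBmin
  set Δ := B - A
  have hΔ : Δ.IsHermitian := hB.isHermitian.sub hA.isHermitian
  have hΔT : Δᵀ = Δ := by simpa using hΔ.eq
  have hΔΔ : frobNorm Δ ^ 2 = (Δ * Δ).trace := by rw [frobNorm_sq, hΔT]
  have hcs : ((S - S') * Δ).trace ≤ frobNorm Δ * frobNorm (S' - S) := by
    calc ((S - S') * Δ).trace = -(Δᵀ * (S' - S)).trace := by
          rw [hΔT, trace_mul_comm Δ, ← trace_neg, ← Matrix.neg_mul, neg_sub]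
      _ ≤ _ := (neg_le_abs _).trans (abs_trace_transpose_mul_le_frobNorm _ _)
  have hpen : 0 ≤ 2 * lam * (Δ * Δ).trace := by rw [← hΔΔ]; positivity
  calc frobNorm Δ ^ 2 ≤ specNorm A * specNorm B * (A⁻¹ * Δ * B⁻¹ * Δ).trace :=
        hΔΔ ▸ trace_mul_self_le_specNorm_mul_specNorm_mul hA hB hΔ
    _ ≤ specNorm A * specNorm B * (frobNorm Δ * frobNorm (S' - S)) :=
        mul_le_mul_of_nonneg_left (by linarith)
          (mul_nonneg (specNorm_nonneg A) (specNorm_nonneg B))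
    _ = _ := by ring

end FirstOrder

theorem stmt4_general {p : ℕ} (S S' : Matrix (Fin p) (Fin p) ℝ)
    (lam : ℝ) (hlam : 0 < lam) (Θhat Θhat' : Matrix (Fin p) (Fin p) ℝ)
    (hΘhat : Θhat.PosDef ∧ ∀ Θ : Matrix (Fin p) (Fin p) ℝ, Θ.PosDef →
      ridgeObj S lam Θhat ≤ ridgeObj S lam Θ)
    (hΘhat' : Θhat'.PosDef ∧ ∀ Θ : Matrix (Fin p) (Fin p) ℝ, Θ.PosDef →
      ridgeObj S' lam Θhat' ≤ ridgeObj S' lam Θ) :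
    frobNorm (Θhat' - Θhat) ≤
      max (specNorm Θhat ^ 2) (specNorm Θhat' ^ 2) * frobNorm (S' - S) := by
  have hsq := frobNorm_sub_sq_le_of_isMinOn hlam.le hΘhat.1 hΘhat'.1
    (isMinOn_iff.mpr hΘhat.2) (isMinOn_iff.mpr hΘhat'.2)
  set m := specNorm Θhat
  set m' := specNorm Θhat'
  have hm₀ : 0 ≤ m := specNorm_nonneg Θhat
  have hm₀' : 0 ≤ m' := specNorm_nonneg Θhat'
  have hF : 0 ≤ frobNorm (S' - S) := Real.sqrt_nonneg _
  have hm : m * m' ≤ max (m ^ 2) (m' ^ 2) := by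
    rcases le_total m m' with h | h <;>
      nlinarith [le_max_left (m ^ 2) (m' ^ 2), le_max_right (m ^ 2) (m' ^ 2)]
  calc frobNorm (Θhat' - Θhat) ≤ m * m' * frobNorm (S' - S) := by
        nlinarith [mul_nonneg (mul_nonneg hm₀ hm₀') hF]
    _ ≤ _ := mul_le_mul_of_nonneg_right hm hF

/-- If `Θ̂` and `Θ̂′` are minimizers of the ridge-penalized
negative log-likelihood with inputs `S` and `S′` respectively, then
`‖Θ̂′ − Θ̂‖_F ≤ max {‖Θ̂‖₂², ‖Θ̂′‖₂²} ‖S′ − S‖_F`. -/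
theorem stmt4 {p : ℕ} (S S' : Matrix (Fin p) (Fin p) ℝ) (hS : Sᵀ = S) (hS' : S'ᵀ = S')
    (lam : ℝ) (hlam : 0 < lam) (Θhat Θhat' : Matrix (Fin p) (Fin p) ℝ)
    (hΘhat : Θhat.PosDef ∧ ∀ Θ : Matrix (Fin p) (Fin p) ℝ, Θ.PosDef →
      ridgeObj S lam Θhat ≤ ridgeObj S lam Θ)
    (hΘhat' : Θhat'.PosDef ∧ ∀ Θ : Matrix (Fin p) (Fin p) ℝ, Θ.PosDef →
      ridgeObj S' lam Θhat' ≤ ridgeObj S' lam Θ) :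
    frobNorm (Θhat' - Θhat) ≤
      max (specNorm Θhat ^ 2) (specNorm Θhat' ^ 2) * frobNorm (S' - S) :=
  stmt4_general S S' lam hlam Θhat Θhat' hΘhat hΘhat'
end

section
/- Let Σ* be a real symmetric positive definite p×p matrix, let (Sₙ) be a sequence of real symmetric p×p matrices with Sₙ → Σ* (entrywise, equivalently in Frobenius norm), and let (λₙ) be positive reals with λₙ → 0. For each n, let Θ̂ₙ be the unique minimizer of Θ ↦ −log det Θ + tr(SₙΘ) + λₙ‖Θ‖_F² over symmetric positive definite matrices. Then Θ̂ₙ → (Σ*)⁻¹ in Frobenius norm. -/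
/-!
Write `Σ* = Bᴴ B` and measure `Θ` by Stein's loss `D(M) = tr M - log det M - p` of
`M = B Θ Bᴴ`, which equals `tr (Σ* Θ) - log det (Σ* Θ) - p`. Comparing the objective at `Θ̂ₙ` with
its value at `(Σ*)⁻¹` gives `D(Mₙ) ≤ ‖Sₙ - Σ*‖ (‖Θ̂ₙ‖ + ‖(Σ*)⁻¹‖) + λₙ ‖(Σ*)⁻¹‖²`, and
`‖Θ̂ₙ‖ ≤ K (D(Mₙ) + p)` since `‖M‖ ≤ tr M ≤ 2 (D(M) + p)`; as `‖Sₙ - Σ*‖ → 0` and `λₙ → 0`,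
this forces `D(Mₙ) → 0`. Eigenvalue by eigenvalue `(t - 1)² ≤ 2 (1 + t) (t - log t - 1)`, so
`‖Mₙ - 1‖² ≤ 2 (1 + tr Mₙ) D(Mₙ) → 0`, and `Θ̂ₙ = B⁻¹ Mₙ (Bᴴ)⁻¹ → (Bᴴ B)⁻¹ = (Σ*)⁻¹`.
-/

open scoped Matrix

open Filter Topology Matrix

attribute [local instance] Matrix.frobeniusNormedAddCommGroup

lemma Real.sq_sqrt_sub_one_le {t : ℝ} (ht : 0 < t) : (√t - 1) ^ 2 ≤ t - Real.log t - 1 := by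
  have hlog : Real.log √t ≤ √t - 1 := Real.log_le_sub_one_of_pos (Real.sqrt_pos.2 ht)
  rw [Real.log_sqrt ht.le] at hlog
  nlinarith [Real.sq_sqrt ht.le]

lemma Real.le_two_mul_sub_log_add_two {t : ℝ} (ht : 0 < t) :
    t ≤ 2 * (t - Real.log t - 1) + 2 := by
  nlinarith [Real.sq_sqrt_sub_one_le ht, Real.sq_sqrt ht.le, sq_nonneg (√t - 2)]

lemma Real.sq_sub_one_le_mul_sub_log {t : ℝ} (ht : 0 < t) :
    (t - 1) ^ 2 ≤ 2 * (1 + t) * (t - Real.log t - 1) := by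
  have hu := Real.sq_sqrt ht.le
  calc (t - 1) ^ 2 = (√t - 1) ^ 2 * (√t + 1) ^ 2 := by linear_combination (2 - t - √t ^ 2) * hu
    _ ≤ (√t - 1) ^ 2 * (2 * (1 + t)) := by
        gcongr
        nlinarith [sq_nonneg (√t - 1)]
    _ ≤ 2 * (1 + t) * (t - Real.log t - 1) := by
        rw [mul_comm]
        exact mul_le_mul_of_nonneg_left (Real.sq_sqrt_sub_one_le ht) (by positivity)

lemma Filter.Tendsto.of_le_mul_add {ι : Type*} {l : Filter ι} {x e c : ι → ℝ}
    (hx : ∀ i, 0 ≤ x i) (hle : ∀ i, x i ≤ e i * x i + c i) (he : Tendsto e l (𝓝 0))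
    (hc : Tendsto c l (𝓝 0)) : Tendsto x l (𝓝 0) := by
  have hsmall : ∀ᶠ i in l, e i ≤ 1 / 2 := he.eventually (ge_mem_nhds (by norm_num))
  refine squeeze_zero' (.of_forall hx) (hsmall.mono fun i hi => ?_) (by simpa using hc.const_mul 2)
  nlinarith [hle i, mul_le_mul_of_nonneg_right hi (hx i)]

namespace Matrix

section Frobenius

variable {m n : Type*} [Fintype m] [Fintype n]

lemma frobenius_norm_sq_eq_sum (A : Matrix m n ℝ) : ‖A‖ ^ 2 = ∑ i, ∑ j, A i j ^ 2 := by
  rw [frobenius_norm_def, ← Real.sqrt_eq_rpow, Real.sq_sqrt (by positivity)]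
  simp

lemma frobenius_norm_sq_eq_trace (A : Matrix m n ℝ) : ‖A‖ ^ 2 = (A * Aᵀ).trace := by
  rw [frobenius_norm_sq_eq_sum]
  simp [trace, mul_apply, sq]

lemma abs_trace_mul_le_frobenius_norm (A : Matrix m n ℝ) (B : Matrix n m ℝ) :
    |(A * B).trace| ≤ ‖A‖ * ‖B‖ := by
  rw [← frobenius_norm_transpose B]
  calc |(A * B).trace|
      = |inner ℝ (WithLp.toLp 2 fun i => WithLp.toLp 2 fun j => A i j)
          (WithLp.toLp 2 fun i => WithLp.toLp 2 fun j => Bᵀ i j)| := by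
        simp [PiLp.inner_apply, trace, mul_apply, mul_comm]
    _ ≤ ‖A‖ * ‖Bᵀ‖ := abs_real_inner_le_norm _ _

end Frobenius

variable {n : Type*} [Fintype n] [DecidableEq n]

lemma IsHermitian.trace_cfc {A : Matrix n n ℝ} (hA : A.IsHermitian) (f : ℝ → ℝ) :
    (cfc f A).trace = ∑ i, f (hA.eigenvalues i) := by
  rw [hA.cfc_eq, IsHermitian.cfc, Unitary.conjStarAlgAut_apply, trace_mul_cycle,
    Unitary.coe_star_mul_self, one_mul, trace_diagonal]
  rfl

lemma IsHermitian.frobenius_norm_cfc_sq {A : Matrix n n ℝ} (hA : A.IsHermitian) (f : ℝ → ℝ) :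
    ‖cfc f A‖ ^ 2 = ∑ i, f (hA.eigenvalues i) ^ 2 := by
  have hf : ContinuousOn f (spectrum ℝ A) := A.finite_real_spectrum.continuousOn f
  rw [frobenius_norm_sq_eq_trace, ← conjTranspose_eq_transpose_of_trivial, ← star_eq_conjTranspose,
    (cfc_predicate f A).star_eq, ← cfc_mul f f A hf hf, hA.trace_cfc]
  simp only [sq]

lemma PosSemidef.frobenius_norm_le_trace {A : Matrix n n ℝ} (hA : A.PosSemidef) :
    ‖A‖ ≤ A.trace := by
  have hsq := hA.1.frobenius_norm_cfc_sq id
  rw [cfc_id ℝ A hA.1.isSelfAdjoint] at hsq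
  refine (pow_le_pow_iff_left₀ (norm_nonneg A) hA.trace_nonneg two_ne_zero).1 ?_
  rw [hsq, hA.1.trace_eq_sum_eigenvalues]
  exact Finset.sum_sq_le_sq_sum_of_nonneg fun i _ => hA.eigenvalues_nonneg i

open scoped MatrixOrder in
lemma PosDef.exists_isUnit_eq_conjTranspose_mul_self {A : Matrix n n ℝ} (hA : A.PosDef) :
    ∃ B, IsUnit B ∧ A = Bᴴ * B :=
  CStarAlgebra.isStrictlyPositive_iff_eq_star_mul_self.mp hA.isStrictlyPositive

lemma nonsing_inv_mul_conj_mul_nonsing_inv {B : Matrix n n ℝ} (hB : IsUnit B)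
    (Θ : Matrix n n ℝ) : B⁻¹ * (B * Θ * Bᴴ) * Bᴴ⁻¹ = Θ := by
  rw [← mul_assoc, ← mul_assoc, nonsing_inv_mul _ ((isUnit_iff_isUnit_det B).1 hB), one_mul,
    mul_assoc, mul_nonsing_inv _ ((isUnit_iff_isUnit_det Bᴴ).1 hB.star), mul_one]

/-- Stein's loss of `A` against the identity. For positive definite `A` it is `∑ φ(λᵢ)` over the
eigenvalues, with `φ(t) = t - log t - 1 ≥ 0` vanishing only at `t = 1`. -/
noncomputable def logDetDiv (A : Matrix n n ℝ) : ℝ :=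
  A.trace - Real.log A.det - Fintype.card n

lemma logDetDiv_mul_comm (A B : Matrix n n ℝ) : logDetDiv (A * B) = logDetDiv (B * A) := by
  rw [logDetDiv, logDetDiv, trace_mul_comm, det_mul_comm]

lemma logDetDiv_conjTranspose_mul_self_mul (B Θ : Matrix n n ℝ) :
    logDetDiv (Bᴴ * B * Θ) = logDetDiv (B * Θ * Bᴴ) := by
  rw [mul_assoc, logDetDiv_mul_comm, mul_assoc]

namespace PosDef

variable {A : Matrix n n ℝ}

lemma logDetDiv_eq_sum (hA : A.PosDef) :
    logDetDiv A = ∑ i, (hA.1.eigenvalues i - Real.log (hA.1.eigenvalues i) - 1) := by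
  have hdet : A.det = ∏ i, hA.1.eigenvalues i := by
    simpa using hA.1.det_eq_prod_eigenvalues
  rw [logDetDiv, hdet, Real.log_prod fun i _ => (hA.eigenvalues_pos i).ne',
    hA.1.trace_eq_sum_eigenvalues]
  simp [Finset.sum_sub_distrib]

lemma logDetDiv_nonneg (hA : A.PosDef) : 0 ≤ logDetDiv A := by
  rw [hA.logDetDiv_eq_sum]
  exact Finset.sum_nonneg fun i _ => by
    linarith [Real.log_le_sub_one_of_pos (hA.eigenvalues_pos i)]

lemma trace_le_logDetDiv (hA : A.PosDef) : A.trace ≤ 2 * (logDetDiv A + Fintype.card n) := by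
  rw [hA.logDetDiv_eq_sum, hA.1.trace_eq_sum_eigenvalues]
  calc ∑ i, (hA.1.eigenvalues i : ℝ)
      ≤ ∑ i, (2 * (hA.1.eigenvalues i - Real.log (hA.1.eigenvalues i) - 1) + 2) :=
        Finset.sum_le_sum fun i _ => Real.le_two_mul_sub_log_add_two (hA.eigenvalues_pos i)
    _ = _ := by
        rw [Finset.sum_add_distrib, ← Finset.mul_sum, Finset.sum_const, Finset.card_univ,
          nsmul_eq_mul]
        ring

lemma frobenius_norm_sub_one_sq_le (hA : A.PosDef) :
    ‖A - 1‖ ^ 2 ≤ 2 * (1 + A.trace) * logDetDiv A := by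
  have hcfc : A - 1 = cfc (fun t : ℝ => t - 1) A := by
    rw [cfc_sub (fun t : ℝ => t) (fun _ => 1) A, cfc_id' ℝ A hA.1.isSelfAdjoint,
      cfc_const_one ℝ A hA.1.isSelfAdjoint]
  have hle : ∀ i, hA.1.eigenvalues i ≤ A.trace := fun i => by
    rw [hA.1.trace_eq_sum_eigenvalues]
    exact Finset.single_le_sum (fun j _ => (hA.eigenvalues_pos j).le) (Finset.mem_univ i)
  rw [hcfc, hA.1.frobenius_norm_cfc_sq, hA.logDetDiv_eq_sum, Finset.mul_sum]
  refine Finset.sum_le_sum fun i _ => ?_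
  have hpos := hA.eigenvalues_pos i
  calc (hA.1.eigenvalues i - 1) ^ 2
      ≤ 2 * (1 + hA.1.eigenvalues i) * (hA.1.eigenvalues i - Real.log (hA.1.eigenvalues i) - 1) :=
        Real.sq_sub_one_le_mul_sub_log hpos
    _ ≤ _ := by
        gcongr
        · linarith [Real.log_le_sub_one_of_pos hpos]
        · exact hle i

end PosDef

lemma tendsto_one_of_logDetDiv_tendsto_zero {ι : Type*} {l : Filter ι} {M : ι → Matrix n n ℝ}
    (hM : ∀ i, (M i).PosDef) (h : Tendsto (fun i => logDetDiv (M i)) l (𝓝 0)) :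
    Tendsto M l (𝓝 1) := by
  have hbound : ∀ i, ‖M i - 1‖ ^ 2
      ≤ 2 * (1 + 2 * (logDetDiv (M i) + Fintype.card n)) * logDetDiv (M i) := fun i =>
    (hM i).frobenius_norm_sub_one_sq_le.trans <| mul_le_mul_of_nonneg_right
      (by linarith [(hM i).trace_le_logDetDiv]) (hM i).logDetDiv_nonneg
  have hsq : Tendsto (fun i => ‖M i - 1‖ ^ 2) l (𝓝 0) :=
    squeeze_zero (fun i => sq_nonneg _) hbound <| by
      simpa using ((((h.add_const _).const_mul 2).const_add 1).const_mul 2).mul h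
  exact tendsto_iff_norm_sub_tendsto_zero.2 <| by
    simpa [Real.sqrt_sq (norm_nonneg _)] using hsq.sqrt

namespace PosDef

variable {C : Matrix n n ℝ}

lemma logDetDiv_mul_nonneg (hC : C.PosDef) {Θ : Matrix n n ℝ} (hΘ : Θ.PosDef) :
    0 ≤ logDetDiv (C * Θ) := by
  obtain ⟨B, hB, rfl⟩ := hC.exists_isUnit_eq_conjTranspose_mul_self
  rw [logDetDiv_conjTranspose_mul_self_mul]
  exact ((IsUnit.posDef_star_right_conjugate_iff hB).2 hΘ).logDetDiv_nonneg

lemma exists_frobenius_norm_le (hC : C.PosDef) :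
    ∃ K, ∀ Θ : Matrix n n ℝ, Θ.PosDef → ‖Θ‖ ≤ K * (logDetDiv (C * Θ) + Fintype.card n) := by
  obtain ⟨B, hB, rfl⟩ := hC.exists_isUnit_eq_conjTranspose_mul_self
  refine ⟨‖B⁻¹‖ * 2 * ‖Bᴴ⁻¹‖, fun Θ hΘ => ?_⟩
  have hM : (B * Θ * Bᴴ).PosDef := (IsUnit.posDef_star_right_conjugate_iff hB).2 hΘ
  rw [logDetDiv_conjTranspose_mul_self_mul]
  calc ‖Θ‖ = ‖B⁻¹ * (B * Θ * Bᴴ) * Bᴴ⁻¹‖ := by rw [nonsing_inv_mul_conj_mul_nonsing_inv hB]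
    _ ≤ ‖B⁻¹‖ * ‖B * Θ * Bᴴ‖ * ‖Bᴴ⁻¹‖ :=
        (frobenius_norm_mul _ _).trans (by gcongr; exact frobenius_norm_mul _ _)
    _ ≤ ‖B⁻¹‖ * (2 * (logDetDiv (B * Θ * Bᴴ) + Fintype.card n)) * ‖Bᴴ⁻¹‖ := by
        gcongr
        exact hM.posSemidef.frobenius_norm_le_trace.trans hM.trace_le_logDetDiv
    _ = _ := by ring

lemma tendsto_inv_of_logDetDiv_mul_tendsto_zero (hC : C.PosDef) {ι : Type*} {l : Filter ι}
    {Θ : ι → Matrix n n ℝ} (hΘ : ∀ i, (Θ i).PosDef)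
    (h : Tendsto (fun i => logDetDiv (C * Θ i)) l (𝓝 0)) : Tendsto Θ l (𝓝 C⁻¹) := by
  obtain ⟨B, hB, rfl⟩ := hC.exists_isUnit_eq_conjTranspose_mul_self
  simp only [logDetDiv_conjTranspose_mul_self_mul] at h
  have hM : Tendsto (fun i => B * Θ i * Bᴴ) l (𝓝 1) := tendsto_one_of_logDetDiv_tendsto_zero
    (fun i => (IsUnit.posDef_star_right_conjugate_iff hB).2 (hΘ i)) h
  have hlim := (hM.const_mul B⁻¹).mul_const Bᴴ⁻¹
  rw [mul_one, ← mul_inv_rev] at hlim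
  simpa only [nonsing_inv_mul_conj_mul_nonsing_inv hB] using hlim

end PosDef

end Matrix

lemma frobNorm_eq_norm {p q : ℕ} (A : Matrix (Fin p) (Fin q) ℝ) : frobNorm A = ‖A‖ := by
  rw [frobNorm, ← frobenius_norm_sq_eq_sum, Real.sqrt_sq (norm_nonneg _)]

lemma ridgeObj_eq {p : ℕ} (S : Matrix (Fin p) (Fin p) ℝ) (lam : ℝ)
    (Θ : Matrix (Fin p) (Fin p) ℝ) :
    ridgeObj S lam Θ = -Real.log Θ.det + (S * Θ).trace + lam * ‖Θ‖ ^ 2 := by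
  rw [ridgeObj, frobenius_norm_sq_eq_sum]

lemma logDetDiv_mul_le_of_ridgeObj_le {p : ℕ} {C S Θ : Matrix (Fin p) (Fin p) ℝ} {lam : ℝ}
    (hC : C.PosDef) (hΘ : Θ.PosDef) (hlam : 0 ≤ lam)
    (hmin : ridgeObj S lam Θ ≤ ridgeObj S lam C⁻¹) :
    logDetDiv (C * Θ) ≤ ‖S - C‖ * (‖Θ‖ + ‖C⁻¹‖) + lam * ‖C⁻¹‖ ^ 2 := by
  have hlogdet : Real.log (C * Θ).det = Real.log C.det + Real.log Θ.det := by
    rw [det_mul, Real.log_mul hC.det_pos.ne' hΘ.det_pos.ne']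
  have hloginv : Real.log C⁻¹.det = -Real.log C.det := by
    rw [det_nonsing_inv, Ring.inverse_eq_inv', Real.log_inv]
  have htrace : (S * Θ).trace - (S * C⁻¹).trace
      = (C * Θ).trace - p + ((S - C) * (Θ - C⁻¹)).trace := by
    rw [sub_mul, mul_sub, mul_sub, mul_nonsing_inv _ (isUnit_iff_ne_zero.2 hC.det_pos.ne')]
    simp only [trace_sub, trace_one, Fintype.card_fin]
    ring
  have hcs : -((S - C) * (Θ - C⁻¹)).trace ≤ ‖S - C‖ * (‖Θ‖ + ‖C⁻¹‖) :=
    (neg_le_abs _).trans <| (abs_trace_mul_le_frobenius_norm _ _).trans <| by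
      gcongr
      exact norm_sub_le _ _
  rw [ridgeObj_eq, ridgeObj_eq, hloginv] at hmin
  rw [logDetDiv, hlogdet, Fintype.card_fin]
  nlinarith [mul_nonneg hlam (sq_nonneg ‖Θ‖)]

theorem stmt5_general {p : ℕ} (Sigstar : Matrix (Fin p) (Fin p) ℝ) (hSigstar : Sigstar.PosDef)
    (S : ℕ → Matrix (Fin p) (Fin p) ℝ)
    (hSconv : ∀ i j, Filter.Tendsto (fun n => S n i j) Filter.atTop (nhds (Sigstar i j)))
    (lam : ℕ → ℝ) (hlam : ∀ n, 0 < lam n)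
    (hlamconv : Filter.Tendsto lam Filter.atTop (nhds 0))
    (Θhat : ℕ → Matrix (Fin p) (Fin p) ℝ)
    (hΘhat : ∀ n, (Θhat n).PosDef ∧ ∀ Θ : Matrix (Fin p) (Fin p) ℝ, Θ.PosDef →
      ridgeObj (S n) (lam n) (Θhat n) ≤ ridgeObj (S n) (lam n) Θ) :
    Filter.Tendsto (fun n => frobNorm (Θhat n - Sigstar⁻¹)) Filter.atTop (nhds 0) := by
  have hS : Tendsto (fun n => ‖S n - Sigstar‖) atTop (𝓝 0) :=
    tendsto_iff_norm_sub_tendsto_zero.1 (tendsto_pi_nhds.2 fun i => tendsto_pi_nhds.2 (hSconv i))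
  obtain ⟨K, hK⟩ := hSigstar.exists_frobenius_norm_le
  have hdiv : Tendsto (fun n => logDetDiv (Sigstar * Θhat n)) atTop (𝓝 0) := by
    refine .of_le_mul_add (e := fun n => ‖S n - Sigstar‖ * K)
      (c := fun n => ‖S n - Sigstar‖ * (K * p + ‖Sigstar⁻¹‖) + lam n * ‖Sigstar⁻¹‖ ^ 2)
      (fun n => hSigstar.logDetDiv_mul_nonneg (hΘhat n).1) (fun n => ?_)
      (by simpa using hS.mul_const K) (by simpa using (hS.mul_const _).add (hlamconv.mul_const _))
    calc logDetDiv (Sigstar * Θhat n)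
        ≤ ‖S n - Sigstar‖ * (‖Θhat n‖ + ‖Sigstar⁻¹‖) + lam n * ‖Sigstar⁻¹‖ ^ 2 :=
          logDetDiv_mul_le_of_ridgeObj_le hSigstar (hΘhat n).1 (hlam n).le
            ((hΘhat n).2 _ hSigstar.inv)
      _ ≤ ‖S n - Sigstar‖ * (K * (logDetDiv (Sigstar * Θhat n) + p) + ‖Sigstar⁻¹‖)
            + lam n * ‖Sigstar⁻¹‖ ^ 2 := by
          gcongr
          simpa using hK _ (hΘhat n).1
      _ = _ := by ring
  have hΘ := hSigstar.tendsto_inv_of_logDetDiv_mul_tendsto_zero (fun n => (hΘhat n).1) hdiv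
  simpa only [frobNorm_eq_norm] using tendsto_iff_norm_sub_tendsto_zero.1 hΘ

/-- If `Sₙ → Σ*` entrywise with `Σ*` symmetric positive definite,
`λₙ > 0` with `λₙ → 0`, and `Θ̂ₙ` is the minimizer of the ridge-penalized negative
log-likelihood with inputs `Sₙ, λₙ`, then `Θ̂ₙ → (Σ*)⁻¹` in Frobenius norm. -/
theorem stmt5 {p : ℕ} (Sigstar : Matrix (Fin p) (Fin p) ℝ) (hSigstar : Sigstar.PosDef)
    (S : ℕ → Matrix (Fin p) (Fin p) ℝ) (hSsymm : ∀ n, (S n)ᵀ = S n)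
    (hSconv : ∀ i j, Filter.Tendsto (fun n => S n i j) Filter.atTop (nhds (Sigstar i j)))
    (lam : ℕ → ℝ) (hlam : ∀ n, 0 < lam n)
    (hlamconv : Filter.Tendsto lam Filter.atTop (nhds 0))
    (Θhat : ℕ → Matrix (Fin p) (Fin p) ℝ)
    (hΘhat : ∀ n, (Θhat n).PosDef ∧ ∀ Θ : Matrix (Fin p) (Fin p) ℝ, Θ.PosDef →
      ridgeObj (S n) (lam n) (Θhat n) ≤ ridgeObj (S n) (lam n) Θ) :
    Filter.Tendsto (fun n => frobNorm (Θhat n - Sigstar⁻¹)) Filter.atTop (nhds 0) :=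
  stmt5_general Sigstar hSigstar S hSconv lam hlam hlamconv Θhat hΘhat
end

section
/- Let S and B be real symmetric p×p matrices and ρ > 0. Let ρB − S = Q diag(μ₁, …, μ_p) Qᵀ be an orthogonal eigendecomposition, and define Θ̂ = Q diag(θ₁, …, θ_p) Qᵀ with θ_i = (μ_i + √(μ_i² + 4ρ))/(2ρ). Then Θ̂ is symmetric positive definite and is the unique minimizer over symmetric positive definite p×p matrices Θ of −log det Θ + tr(SΘ) + (ρ/2)‖Θ − B‖_F². -/
/-!
Write `A = Θ̂`. Each `θᵢ` is the positive root of `ρθ² − μᵢθ − 1 = 0`, so `θᵢ > 0` and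
`1/θᵢ = ρθᵢ − μᵢ`; conjugating by `Q` gives `A ≻ 0` and the stationarity equation
`A⁻¹ = S + ρ(A − B)`. For `Θ ≻ 0`, concavity of `log det` gives
`log det Θ ≤ log det A + tr(A⁻¹Θ) − p`, which follows from `log x ≤ x − 1` applied to the
eigenvalues of the congruent matrix `R⁻¹ΘR⁻ᵀ`, where `A = RRᵀ`. Expanding
`‖Θ − B‖² = ‖A − B‖² + ‖Θ − A‖² + 2⟨Θ − A, A − B⟩`, stationarity cancels every term that is
linear in `Θ − A`, so the objective at `Θ` exceeds the objective at `A` by at least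
`(ρ/2)‖Θ − A‖² > 0`.
-/

namespace Matrix

variable {m n : Type*} [Fintype m] [Fintype n]

lemma sum_sum_sub_sq_eq {R : Type*} [CommRing R] (X Y Z : Matrix m n R) :
    ∑ i, ∑ j, (X i j - Z i j) ^ 2 = ∑ i, ∑ j, (Y i j - Z i j) ^ 2 + ∑ i, ∑ j, (X - Y) i j ^ 2
      + 2 * trace ((X - Y) * (Y - Z)ᵀ) := by
  rw [← sum_hadamard_eq, Finset.mul_sum]
  simp only [Finset.mul_sum, ← Finset.sum_add_distrib, hadamard_apply, sub_apply]
  refine Finset.sum_congr rfl fun i _ => Finset.sum_congr rfl fun j _ => ?_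
  ring

lemma sum_sum_sq_pos_of_ne_zero {X : Matrix m n ℝ} (hX : X ≠ 0) :
    0 < ∑ i, ∑ j, X i j ^ 2 := by
  obtain ⟨i, j, hij⟩ : ∃ i j, X i j ≠ 0 := by
    by_contra! h
    exact hX (ext h)
  exact Finset.sum_pos' (fun i _ => Finset.sum_nonneg fun j _ => sq_nonneg _)
    ⟨i, Finset.mem_univ i, Finset.sum_pos' (fun j _ => sq_nonneg _)
      ⟨j, Finset.mem_univ j, by positivity⟩⟩

variable [DecidableEq n]

lemma inv_mul_diagonal_mul_transpose_s10 {R : Type*} [CommRing R] {Q : Matrix n n R}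
    (hQ : Q * Qᵀ = 1) {d e : n → R} (hde : d * e = 1) :
    (Q * diagonal d * Qᵀ)⁻¹ = Q * diagonal e * Qᵀ := by
  refine inv_eq_right_inv ?_
  calc Q * diagonal d * Qᵀ * (Q * diagonal e * Qᵀ) = Q * (diagonal d * diagonal e) * Qᵀ := by
        simp only [Matrix.mul_assoc, ← Matrix.mul_assoc Qᵀ Q, mul_eq_one_comm.mp hQ,
          Matrix.one_mul]
    _ = 1 := by
        rw [diagonal_mul_diagonal', ← Pi.mul_def, hde]
        simpa using hQ

lemma mul_diagonal_sqrt_mul_transpose_self {Q : Matrix n n ℝ} {d : n → ℝ} (hd : ∀ i, 0 ≤ d i) :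
    Q * diagonal (fun i => √(d i)) * (Q * diagonal fun i => √(d i))ᵀ = Q * diagonal d * Qᵀ := by
  rw [transpose_mul, diagonal_transpose, Matrix.mul_assoc, ← Matrix.mul_assoc (diagonal _),
    diagonal_mul_diagonal, ← Matrix.mul_assoc]
  congr
  exact funext fun i => Real.mul_self_sqrt (hd i)

lemma PosDef.log_det_le_trace_sub_card_s10 {M : Matrix n n ℝ} (hM : M.PosDef) :
    Real.log M.det ≤ M.trace - Fintype.card n := by
  have hpos := hM.eigenvalues_pos
  rw [hM.isHermitian.det_eq_prod_eigenvalues, hM.isHermitian.trace_eq_sum_eigenvalues]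
  simp only [RCLike.ofReal_real_eq_id, id]
  calc Real.log (∏ i, hM.isHermitian.eigenvalues i)
      = ∑ i, Real.log (hM.isHermitian.eigenvalues i) := Real.log_prod fun i _ => (hpos i).ne'
    _ ≤ ∑ i, (hM.isHermitian.eigenvalues i - 1) :=
      Finset.sum_le_sum fun i _ => Real.log_le_sub_one_of_pos (hpos i)
    _ = _ := by simp [Finset.sum_sub_distrib]

lemma PosDef.log_det_le_log_det_add_trace_inv_mul {R Θ : Matrix n n ℝ} (hΘ : Θ.PosDef)
    (hR : IsUnit R) :
    Real.log Θ.det ≤ Real.log (R * Rᵀ).det + ((R * Rᵀ)⁻¹ * Θ).trace - Fintype.card n := by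
  have hRdet : R.det ≠ 0 := ((isUnit_iff_isUnit_det R).mp hR).ne_zero
  set M := R⁻¹ * Θ * (R⁻¹)ᵀ with hMdef
  have hM : M.PosDef := by
    simpa using hΘ.mul_mul_conjTranspose_same
      (vecMul_injective_iff_isUnit.mpr (isUnit_nonsing_inv_iff.mpr hR))
  have hdet : Θ.det = M.det * (R * Rᵀ).det := by
    simp only [hMdef, det_mul, det_transpose, det_nonsing_inv, Ring.inverse_eq_inv']
    field_simp
  have htrace : M.trace = ((R * Rᵀ)⁻¹ * Θ).trace := by
    rw [hMdef, trace_mul_cycle, mul_inv_rev, transpose_nonsing_inv]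
  rw [hdet, Real.log_mul hM.det_pos.ne' (by simpa [det_mul] using hRdet), ← htrace]
  linarith [hM.log_det_le_trace_sub_card_s10]

end Matrix

noncomputable def posRoot (ρ μ : ℝ) : ℝ := (μ + √(μ ^ 2 + 4 * ρ)) / (2 * ρ)

lemma posRoot_pos {ρ : ℝ} (hρ : 0 < ρ) (μ : ℝ) : 0 < posRoot ρ μ := by
  have : |μ| < √(μ ^ 2 + 4 * ρ) := by
    rw [← Real.sqrt_sq_eq_abs]
    exact Real.sqrt_lt_sqrt (sq_nonneg _) (by linarith)
  exact div_pos (by linarith [neg_le_abs μ]) (by positivity)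

lemma posRoot_mul_sub {ρ : ℝ} (hρ : 0 < ρ) (μ : ℝ) :
    posRoot ρ μ * (ρ * posRoot ρ μ - μ) = 1 := by
  have hsq : √(μ ^ 2 + 4 * ρ) ^ 2 = μ ^ 2 + 4 * ρ := Real.sq_sqrt (by positivity)
  unfold posRoot
  field_simp
  linear_combination hsq

open Matrix

section

variable {n : Type*} [Fintype n] [DecidableEq n]

noncomputable def glassoThetaObjective (S B : Matrix n n ℝ) (ρ : ℝ) (Θ : Matrix n n ℝ) : ℝ :=
  -Real.log Θ.det + (S * Θ).trace + ρ / 2 * ∑ i, ∑ j, (Θ i j - B i j) ^ 2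

theorem glassoThetaObjective_lt_of_inv_eq {S B R A Θ : Matrix n n ℝ} {ρ : ℝ} (hρ : 0 < ρ)
    (hR : IsUnit R) (hA : R * Rᵀ = A) (hstat : A⁻¹ = S + ρ • (A - B)) (hΘ : Θ.PosDef)
    (hne : Θ ≠ A) :
    glassoThetaObjective S B ρ A < glassoThetaObjective S B ρ Θ := by
  subst hA
  set A := R * Rᵀ
  have hAdet : IsUnit A.det :=
    (isUnit_iff_isUnit_det A).mp (hR.mul ((isUnit_transpose R).mpr hR))
  have hsymm : (Θ - A)ᵀ = Θ - A := by
    simpa [A, transpose_mul] using hΘ.isHermitian.eq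
  have hlin : (A⁻¹ * Θ).trace - Fintype.card n
      = (S * Θ).trace - (S * A).trace + ρ * ((Θ - A) * (A - B)ᵀ).trace :=
    calc (A⁻¹ * Θ).trace - Fintype.card n = (A⁻¹ * (Θ - A)).trace := by
          rw [Matrix.mul_sub, trace_sub, nonsing_inv_mul _ hAdet, trace_one]
      _ = (S * (Θ - A)).trace + ρ * ((A - B) * (Θ - A)).trace := by
          rw [hstat, Matrix.add_mul, trace_add, Matrix.smul_mul, trace_smul, smul_eq_mul]
      _ = _ := by
          rw [Matrix.mul_sub S, trace_sub, ← trace_transpose ((Θ - A) * (A - B)ᵀ), transpose_mul,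
            transpose_transpose, hsymm]
  have hlog := hΘ.log_det_le_log_det_add_trace_inv_mul hR
  have hquad := sum_sum_sq_pos_of_ne_zero (sub_ne_zero.mpr hne)
  unfold glassoThetaObjective
  rw [sum_sum_sub_sq_eq Θ A B]
  nlinarith

end

theorem stmt10_general {p : ℕ} (S B : Matrix (Fin p) (Fin p) ℝ)
    (ρ : ℝ) (hρ : 0 < ρ)
    (Q : Matrix (Fin p) (Fin p) ℝ) (μ : Fin p → ℝ) (hQ : Q * Qᵀ = 1)
    (hdecomp : ρ • B - S = Q * Matrix.diagonal μ * Qᵀ)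
    (Θhat : Matrix (Fin p) (Fin p) ℝ)
    (hΘhat : Θhat =
      Q * Matrix.diagonal (fun i => (μ i + Real.sqrt ((μ i) ^ 2 + 4 * ρ)) / (2 * ρ)) * Qᵀ) :
    Θhat.PosDef ∧
      ∀ Θ : Matrix (Fin p) (Fin p) ℝ, Θ.PosDef → Θ ≠ Θhat →
        -Real.log Θhat.det + (S * Θhat).trace + ρ / 2 * ∑ i, ∑ j, (Θhat i j - B i j) ^ 2 <
          -Real.log Θ.det + (S * Θ).trace + ρ / 2 * ∑ i, ∑ j, (Θ i j - B i j) ^ 2 := by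
  set θ := fun i => posRoot ρ (μ i)
  replace hΘhat : Θhat = Q * diagonal θ * Qᵀ := hΘhat
  set R := Q * diagonal fun i => √(θ i)
  have hR : IsUnit R := (IsUnit.of_mul_eq_one _ hQ).mul <| isUnit_diagonal.mpr <|
    Pi.isUnit_iff.mpr fun i => (Real.sqrt_pos.mpr (posRoot_pos hρ _)).ne'.isUnit
  have hRR : R * Rᵀ = Θhat :=
    hΘhat ▸ mul_diagonal_sqrt_mul_transpose_self fun i => (posRoot_pos hρ (μ i)).le
  have hstat : Θhat⁻¹ = S + ρ • (Θhat - B) :=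
    calc Θhat⁻¹ = Q * diagonal (ρ • θ - μ) * Qᵀ := by
          rw [hΘhat, inv_mul_diagonal_mul_transpose_s10 hQ (funext fun i => posRoot_mul_sub hρ (μ i))]
          rfl
      _ = ρ • Θhat - (ρ • B - S) := by
          rw [hΘhat, hdecomp, ← Matrix.smul_mul, ← Matrix.mul_smul, ← Matrix.sub_mul,
            ← Matrix.mul_sub, ← diagonal_smul, diagonal_sub]
          rfl
      _ = S + ρ • (Θhat - B) := by module
  refine ⟨hRR ▸ ?_, fun Θ hΘ hne => glassoThetaObjective_lt_of_inv_eq hρ hR hRR hstat hΘ hne⟩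
  simpa using PosDef.mul_conjTranspose_self R (vecMul_injective_iff_isUnit.mpr hR)

/-- The Θ-minimization step of ADMM for the graphical lasso:
if `ρB − S = Q diag(μ) Qᵀ` with `Q` orthogonal and
`Θ̂ = Q diag(θ) Qᵀ` with `θᵢ = (μᵢ + √(μᵢ² + 4ρ))/(2ρ)`, then `Θ̂` is symmetric
positive definite and is the unique minimizer of
`Θ ↦ −log det Θ + tr(SΘ) + (ρ/2)‖Θ − B‖_F²` over symmetric positive definite
matrices. -/
theorem stmt10 {p : ℕ} (S B : Matrix (Fin p) (Fin p) ℝ)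
    (hSsymm : Sᵀ = S) (hBsymm : Bᵀ = B) (ρ : ℝ) (hρ : 0 < ρ)
    (Q : Matrix (Fin p) (Fin p) ℝ) (μ : Fin p → ℝ) (hQ : Q * Qᵀ = 1)
    (hdecomp : ρ • B - S = Q * Matrix.diagonal μ * Qᵀ)
    (Θhat : Matrix (Fin p) (Fin p) ℝ)
    (hΘhat : Θhat =
      Q * Matrix.diagonal (fun i => (μ i + Real.sqrt ((μ i) ^ 2 + 4 * ρ)) / (2 * ρ)) * Qᵀ) :
    Θhat.PosDef ∧
      ∀ Θ : Matrix (Fin p) (Fin p) ℝ, Θ.PosDef → Θ ≠ Θhat →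
        -Real.log Θhat.det + (S * Θhat).trace + ρ / 2 * ∑ i, ∑ j, (Θhat i j - B i j) ^ 2 <
          -Real.log Θ.det + (S * Θ).trace + ρ / 2 * ∑ i, ∑ j, (Θ i j - B i j) ^ 2 :=
  stmt10_general S B ρ hρ Q μ hQ hdecomp Θhat hΘhat
end

section
/- Let E be a real normed vector space, C ⊆ E a convex set containing 0, and f : E → ℝ a function that is convex on C. Let r > 0 and suppose f(Δ) > f(0) for every Δ ∈ C with ‖Δ‖ = r. If Δ̂ ∈ C satisfies f(Δ̂) ≤ f(0), then ‖Δ̂‖ < r. -/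
/-- Localization lemma: if `f` is convex on a convex set `C`
containing `0`, `f(Δ) > f(0)` for every `Δ ∈ C` on the sphere `‖Δ‖ = r`, and
`Δ̂ ∈ C` satisfies `f(Δ̂) ≤ f(0)`, then `‖Δ̂‖ < r`. -/
theorem stmt12 {E : Type*} [NormedAddCommGroup E] [NormedSpace ℝ E]
    (C : Set E) (f : E → ℝ) (hf : ConvexOn ℝ C f) (h0 : (0 : E) ∈ C)
    (r : ℝ) (hr : 0 < r)
    (hpos : ∀ Δ ∈ C, ‖Δ‖ = r → f 0 < f Δ)
    (Δhat : E) (hΔhat : Δhat ∈ C) (hle : f Δhat ≤ f 0) :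
    ‖Δhat‖ < r := by
  by_contra h
  push_neg at h
  have hn : (0 : ℝ) < ‖Δhat‖ := lt_of_lt_of_le hr h
  set t : ℝ := r / ‖Δhat‖ with ht
  have ht0 : 0 < t := div_pos hr hn
  have ht1 : t ≤ 1 := (div_le_one hn).2 h
  have hmem : t • Δhat ∈ C := by
    have h2 : t • Δhat + (1 - t) • (0 : E) ∈ C :=
      hf.1 hΔhat h0 ht0.le (by linarith) (by ring)
    simpa using h2
  have hnorm : ‖t • Δhat‖ = r := by
    rw [norm_smul, Real.norm_of_nonneg (le_of_lt ht0), ht,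
      div_mul_cancel₀ _ hn.ne']
  have hcomb : f (t • Δhat + (1 - t) • (0 : E)) ≤ t * f Δhat + (1 - t) * f 0 :=
    hf.2 hΔhat h0 (le_of_lt ht0) (by linarith) (by ring)
  have : f (t • Δhat) ≤ f 0 := by
    have h1 : f (t • Δhat) ≤ t * f Δhat + (1 - t) * f 0 := by
      simpa using hcomb
    nlinarith
  exact absurd this (not_le.2 (hpos _ hmem hnorm))
end

section
/- Let Θ be a real symmetric positive definite p×p matrix and Δ a real symmetric p×p matrix such that Θ + vΔ is positive definite for every v ∈ [0, 1]. Then log det(Θ + Δ) − log det Θ − tr(Θ⁻¹Δ) = −∫₀¹ (1 − v)·tr( ((Θ + vΔ)⁻¹ Δ)² ) dv, and the integrand (1 − v)·tr(((Θ + vΔ)⁻¹Δ)²) is nonnegative for every v ∈ [0, 1]. -/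
/-!
With `f v = log det (Θ + v • Δ)`, Jacobi's formula gives `f' v = tr ((Θ + vΔ)⁻¹ Δ)` and the
derivative of the inverse gives `f'' v = -tr (((Θ + vΔ)⁻¹ Δ)²)`; the identity is the first-order
Taylor expansion of `f` on `[0, 1]` with integral remainder. The integrand is nonnegative because,
writing `(Θ + vΔ)⁻¹ = Bᴴ B`, it is the trace of `Cᴴ C` for the Hermitian `C = B Δ Bᴴ`.
-/

open Matrix Set

theorem taylor_integral_remainder_one_of_hasDerivAt {f f' f'' : ℝ → ℝ} {a b : ℝ}
    (hf : ∀ x ∈ uIcc a b, HasDerivAt f (f' x) x)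
    (hf' : ∀ x ∈ uIcc a b, HasDerivAt f' (f'' x) x)
    (hf'' : IntervalIntegrable f'' MeasureTheory.volume a b) :
    f b - f a - (b - a) * f' a = ∫ x in a..b, (b - x) * f'' x := by
  have hG : ∀ x ∈ uIcc a b,
      HasDerivAt (fun x => f x + (b - x) * f' x) ((b - x) * f'' x) x := fun x hx =>
    ((hf x hx).add (((hasDerivAt_id' x).const_sub b).mul (hf' x hx))).congr_deriv (by ring)
  have hint : IntervalIntegrable (fun x => (b - x) * f'' x) MeasureTheory.volume a b :=
    hf''.continuousOn_mul (by fun_prop)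
  rw [intervalIntegral.integral_eq_sub_of_hasDerivAt hG hint]
  ring

section Jacobi

open Polynomial

variable {n 𝕜 : Type*} [Fintype n] [DecidableEq n]

theorem Matrix.eval_det_one_add_X_smul [CommRing 𝕜] (M : Matrix n n 𝕜) (r : 𝕜) :
    (det (1 + (X : 𝕜[X]) • M.map C)).eval r = det (1 + r • M) := by
  rw [← coe_evalRingHom, RingHom.map_det]
  congr 1
  ext i j
  by_cases h : i = j <;> simp [h, mul_comm r]

theorem Matrix.hasDerivAt_det_add_smul [NontriviallyNormedField 𝕜] (Θ Δ : Matrix n n 𝕜) {v₀ : 𝕜}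
    (h : (Θ + v₀ • Δ).det ≠ 0) :
    HasDerivAt (fun v : 𝕜 => (Θ + v • Δ).det)
      ((Θ + v₀ • Δ).det * ((Θ + v₀ • Δ)⁻¹ * Δ).trace) v₀ := by
  set A := Θ + v₀ • Δ
  set P := det (1 + (X : 𝕜[X]) • (A⁻¹ * Δ).map C)
  have hfactor : ∀ v : 𝕜, Θ + v • Δ = A * (1 + (v - v₀) • (A⁻¹ * Δ)) := fun v => by
    rw [mul_add, mul_one, mul_smul_comm, ← mul_assoc,
      mul_nonsing_inv A (isUnit_iff_ne_zero.mpr h), one_mul]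
    module
  have hP : HasDerivAt (fun v => A.det * P.eval (v - v₀)) (A.det * (A⁻¹ * Δ).trace) v₀ := by
    have := ((P.hasDerivAt (v₀ - v₀)).comp_sub_const v₀ v₀).const_mul A.det
    rwa [sub_self, derivative_det_one_add_X_smul] at this
  exact hP.congr_of_eventuallyEq (.of_forall fun v => by
    simp only [hfactor v, det_mul, P, eval_det_one_add_X_smul])

end Jacobi

theorem Matrix.hasDerivAt_log_det_add_smul {n : Type*} [Fintype n] [DecidableEq n]
    (Θ Δ : Matrix n n ℝ) {v₀ : ℝ} (h : (Θ + v₀ • Δ).det ≠ 0) :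
    HasDerivAt (fun v : ℝ => Real.log (Θ + v • Δ).det) ((Θ + v₀ • Δ)⁻¹ * Δ).trace v₀ :=
  ((hasDerivAt_det_add_smul Θ Δ h).log h).congr_deriv (by field_simp)

section Inverse

variable {n 𝕜 : Type*} [Fintype n] [DecidableEq n] [RCLike 𝕜]

attribute [local instance] Matrix.linftyOpNormedRing Matrix.linftyOpNormedAlgebra

theorem HasDerivAt.matrix_inv {f : 𝕜 → Matrix n n 𝕜} {f' : Matrix n n 𝕜} {x : 𝕜}
    (hf : HasDerivAt f f' x) (hx : IsUnit (f x)) :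
    HasDerivAt (fun v => (f v)⁻¹) (-((f x)⁻¹ * f' * (f x)⁻¹)) x := by
  simp_rw [nonsing_inv_eq_ringInverse]
  have := (hasFDerivAt_ringInverse (𝕜 := 𝕜) hx.unit).comp_hasDerivAt_of_eq x hf hx.unit_spec.symm
  simp only [← Ring.inverse_unit, hx.unit_spec] at this
  exact this

theorem Matrix.hasDerivAt_inv_add_smul_mul (Θ Δ : Matrix n n 𝕜) {v₀ : 𝕜}
    (h : IsUnit (Θ + v₀ • Δ)) :
    HasDerivAt (fun v : 𝕜 => (Θ + v • Δ)⁻¹ * Δ)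
      (-((Θ + v₀ • Δ)⁻¹ * Δ * ((Θ + v₀ • Δ)⁻¹ * Δ))) v₀ := by
  have hline : HasDerivAt (fun v : 𝕜 => Θ + v • Δ) Δ v₀ :=
    (((hasDerivAt_id' v₀).smul_const Δ).const_add Θ).congr_deriv (one_smul _ _)
  exact ((hline.matrix_inv h).mul_const Δ).congr_deriv (by simp only [neg_mul, mul_assoc])

theorem Matrix.continuousAt_inv_add_smul_mul (Θ Δ : Matrix n n 𝕜) {v₀ : 𝕜}
    (h : IsUnit (Θ + v₀ • Δ)) : ContinuousAt (fun v : 𝕜 => (Θ + v • Δ)⁻¹ * Δ) v₀ :=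
  (hasDerivAt_inv_add_smul_mul Θ Δ h).continuousAt

theorem Matrix.hasDerivAt_trace_inv_add_smul_mul (Θ Δ : Matrix n n 𝕜) {v₀ : 𝕜}
    (h : IsUnit (Θ + v₀ • Δ)) :
    HasDerivAt (fun v : 𝕜 => ((Θ + v • Δ)⁻¹ * Δ).trace)
      (-((Θ + v₀ • Δ)⁻¹ * Δ * ((Θ + v₀ • Δ)⁻¹ * Δ)).trace) v₀ := by
  rw [← trace_neg]
  exact (traceLinearMap n 𝕜 𝕜).toContinuousLinearMap.hasFDerivAt.comp_hasDerivAt v₀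
    (hasDerivAt_inv_add_smul_mul Θ Δ h)

end Inverse

open scoped ComplexOrder MatrixOrder in
theorem Matrix.PosSemidef.trace_mul_mul_self_nonneg {n 𝕜 : Type*} [Fintype n] [RCLike 𝕜]
    {A Δ : Matrix n n 𝕜} (hA : A.PosSemidef) (hΔ : Δ.IsHermitian) :
    0 ≤ (A * Δ * (A * Δ)).trace := by
  classical
  obtain ⟨B, rfl⟩ : ∃ B : Matrix n n 𝕜, A = Bᴴ * B :=
    CStarAlgebra.nonneg_iff_eq_star_mul_self.mp hA.nonneg
  have hC : (B * Δ * Bᴴ)ᴴ = B * Δ * Bᴴ := by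
    simp only [conjTranspose_mul, conjTranspose_conjTranspose, hΔ.eq, mul_assoc]
  have hcycle : (Bᴴ * B * Δ * (Bᴴ * B * Δ)).trace = ((B * Δ * Bᴴ)ᴴ * (B * Δ * Bᴴ)).trace := by
    rw [hC]
    simp only [mul_assoc]
    rw [trace_mul_comm Bᴴ]
    simp only [mul_assoc]
  rw [hcycle]
  exact (posSemidef_conjTranspose_mul_self _).trace_nonneg

theorem stmt14_general {p : ℕ} (Θ Δ : Matrix (Fin p) (Fin p) ℝ)
    (hΔ : Δᵀ = Δ)
    (hpos : ∀ v ∈ Set.Icc (0 : ℝ) 1, (Θ + v • Δ).PosDef) :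
    (Real.log (Θ + Δ).det - Real.log Θ.det - (Θ⁻¹ * Δ).trace =
      -∫ v in (0 : ℝ)..1,
        (1 - v) * ((((Θ + v • Δ)⁻¹ * Δ) * ((Θ + v • Δ)⁻¹ * Δ)).trace)) ∧
    ∀ v ∈ Set.Icc (0 : ℝ) 1,
      0 ≤ (1 - v) * ((((Θ + v • Δ)⁻¹ * Δ) * ((Θ + v • Δ)⁻¹ * Δ)).trace) := by
  have hIcc : uIcc (0 : ℝ) 1 = Icc 0 1 := uIcc_of_le zero_le_one
  have hcont : ContinuousOn (fun v : ℝ => -((Θ + v • Δ)⁻¹ * Δ * ((Θ + v • Δ)⁻¹ * Δ)).trace)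
      (uIcc 0 1) := continuousOn_of_forall_continuousAt fun v hv => by
    have hM := continuousAt_inv_add_smul_mul Θ Δ (hpos v (hIcc ▸ hv)).isUnit
    exact (continuous_id.matrix_trace.continuousAt.comp (hM.mul hM)).neg
  have key := taylor_integral_remainder_one_of_hasDerivAt
    (fun v hv => hasDerivAt_log_det_add_smul Θ Δ (hpos v (hIcc ▸ hv)).det_pos.ne')
    (fun v hv => hasDerivAt_trace_inv_add_smul_mul Θ Δ (hpos v (hIcc ▸ hv)).isUnit)
    hcont.intervalIntegrable
  refine ⟨?_, fun v hv => mul_nonneg (sub_nonneg.mpr hv.2)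
    ((hpos v hv).inv.posSemidef.trace_mul_mul_self_nonneg (isHermitian_iff_isSymm.mpr hΔ))⟩
  simpa only [one_smul, zero_smul, add_zero, sub_zero, one_mul, mul_neg,
    intervalIntegral.integral_neg] using key

/-- Second-order integral Taylor expansion of `log det`: if `Θ`
is symmetric positive definite, `Δ` symmetric, and `Θ + vΔ` is positive definite
for all `v ∈ [0, 1]`, then
`log det(Θ + Δ) − log det Θ − tr(Θ⁻¹Δ) = −∫₀¹ (1 − v) tr(((Θ + vΔ)⁻¹Δ)²) dv`,
and the integrand is nonnegative on `[0, 1]`. -/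
theorem stmt14 {p : ℕ} (Θ Δ : Matrix (Fin p) (Fin p) ℝ)
    (hΘ : Θ.PosDef) (hΔ : Δᵀ = Δ)
    (hpos : ∀ v ∈ Set.Icc (0 : ℝ) 1, (Θ + v • Δ).PosDef) :
    (Real.log (Θ + Δ).det - Real.log Θ.det - (Θ⁻¹ * Δ).trace =
      -∫ v in (0 : ℝ)..1,
        (1 - v) * ((((Θ + v • Δ)⁻¹ * Δ) * ((Θ + v • Δ)⁻¹ * Δ)).trace)) ∧
    ∀ v ∈ Set.Icc (0 : ℝ) 1,
      0 ≤ (1 - v) * ((((Θ + v • Δ)⁻¹ * Δ) * ((Θ + v • Δ)⁻¹ * Δ)).trace) :=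
  stmt14_general Θ Δ hΔ hpos
end
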